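/- arXiv:0805.1082 — 11 statements merged into one kernel-verified Lean document; each statement's English description precedes it below -/
import Mathlib

section
/- Any overring of a Dedekind domain is a Dedekind domain. That is, if R is a Dedekind domain with fraction field K and S is a ring with R ⊆ S ⊆ K, then S is a Dedekind domain. -/
/-!
For `x ∈ K` the fractional ideal `J = R + R x` is invertible, and `J⁻¹` consists of the
`n ∈ R` with `n x ∈ R`; so `1 = n + n' x` with `n, n', n x, n' x ∈ R`. Applied to the elements
of `S`, this shows that every ideal of `S` is extended from its contraction to `R`, which
carries noetherianity and dimension `≤ 1` over from `R`. It also shows that `S ⊆ R_p` for the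
contraction `p` of any prime of `S`; an element of `K` integral over `S` therefore lies in every
such `R_p` (a Dedekind domain), so its ideal of denominators in `S` lies in no maximal ideal.
-/

open IsLocalization FractionalIdeal
open scoped nonZeroDivisors

section MapUnder

variable {R S : Type*} [CommRing R] [CommRing S] [Algebra R S]

theorem Ideal.under_strictMono_of_map_under_eq
    (h : ∀ J : Ideal S, (J.under R).map (algebraMap R S) = J) :
    StrictMono (Ideal.under R : Ideal S → Ideal R) :=
  Monotone.strictMono_of_injective (fun _ _ => Ideal.comap_mono)
    (Function.LeftInverse.injective h)

theorem isNoetherianRing_of_map_under_eq [IsNoetherianRing R]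
    (h : ∀ J : Ideal S, (J.under R).map (algebraMap R S) = J) : IsNoetherianRing S := by
  rw [isNoetherianRing_iff, isNoetherian_iff']
  exact (Ideal.under_strictMono_of_map_under_eq h).wellFoundedGT

theorem dimensionLEOne_of_map_under_eq [Ring.DimensionLEOne R]
    (h : ∀ J : Ideal S, (J.under R).map (algebraMap R S) = J) : Ring.DimensionLEOne S := by
  refine ⟨fun {Q} hQ0 hQ => Ideal.isMaximal_def.mpr ⟨hQ.ne_top, fun J hQJ => ?_⟩⟩
  have hp0 : Q.under R ≠ ⊥ := fun hp => hQ0 (by rw [← h Q, hp, Ideal.map_bot])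
  have hp : (Q.under R).IsMaximal := Ring.DimensionLEOne.maximalOfPrime hp0 inferInstance
  rw [← h J, hp.out.2 _ (Ideal.under_strictMono_of_map_under_eq h hQJ), Ideal.map_top]

end MapUnder

section Overring

variable {R K : Type*} [CommRing R] [Field K] [Algebra R K] [IsFractionRing R K]

theorem Localization.subalgebra.mem_ofField_iff [IsDomain R] {M : Submonoid R} (hM : M ≤ R⁰)
    {x : K} : x ∈ ofField K M hM ↔ ∃ u ∈ M, IsInteger R (u • x) := by
  refine ⟨fun ⟨a, u, hu, hx⟩ => ⟨u, hu, a, ?_⟩, fun ⟨u, hu, a, ha⟩ => ⟨a, u, hu, ?_⟩⟩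
  · have := IsFractionRing.to_map_ne_zero_of_mem_nonZeroDivisors (K := K) (hM hu)
    rw [hx, Algebra.smul_def]
    field_simp
  · have := IsFractionRing.to_map_ne_zero_of_mem_nonZeroDivisors (K := K) (hM hu)
    rw [ha, Algebra.smul_def]
    field_simp

theorem exists_isInteger_smul_add_smul_eq_one [IsDedekindDomain R] (x : K) :
    ∃ n n' : R, IsInteger R (n • x) ∧ IsInteger R (n' • x) ∧ algebraMap R K n + n' • x = 1 := by
  set J : FractionalIdeal R⁰ K := 1 + spanSingleton R⁰ x with hJ_def
  have hJ : J ≠ 0 := ne_zero_of_lt (lt_of_lt_of_le zero_lt_one le_self_add)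
  have one_mem : (1 : K) ∈ J := (mem_add _ _ _).mpr ⟨1, one_mem_one _, 0, zero_mem _, add_zero 1⟩
  have x_mem : x ∈ J :=
    (mem_add _ _ _).mpr ⟨0, zero_mem _, x, mem_spanSingleton_self _ _, zero_add x⟩
  have mem_inv : ∀ y ∈ J⁻¹, ∃ n : R, algebraMap R K n = y ∧ IsInteger R (n • x) := by
    intro y hy
    obtain ⟨n, hn⟩ := (mem_one_iff R⁰).mp ((mem_inv_iff hJ).mp hy 1 one_mem)
    obtain ⟨a, ha⟩ := (mem_one_iff R⁰).mp ((mem_inv_iff hJ).mp hy x x_mem)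
    rw [mul_one] at hn
    exact ⟨n, hn, a, by rw [Algebra.smul_def, hn, ha]⟩
  have h1 : (1 : K) ∈ J⁻¹ + spanSingleton R⁰ x * J⁻¹ := by
    have hJJ := mul_inv_cancel₀ hJ
    rw [hJ_def, add_mul, one_mul] at hJJ
    rw [hJJ]
    exact one_mem_one _
  obtain ⟨y, hy, _, hxz, hyz⟩ := (mem_add _ _ _).mp h1
  obtain ⟨z, hz, rfl⟩ := mem_singleton_mul.mp hxz
  obtain ⟨n, rfl, hn⟩ := mem_inv y hy
  obtain ⟨n', rfl, hn'⟩ := mem_inv z hz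
  refine ⟨n, n', hn, hn', ?_⟩
  rw [← hyz, Algebra.smul_def, mul_comm]

namespace Subalgebra

open Localization.subalgebra

variable [IsDedekindDomain R] (S : Subalgebra R K)

theorem exists_isInteger_smul_add_smul_eq_one (s : S) :
    ∃ n n' : R, IsInteger R (n • s) ∧ IsInteger R (n' • s) ∧ algebraMap R S n + n' • s = 1 := by
  obtain ⟨n, n', ⟨a, ha⟩, ⟨b, hb⟩, h⟩ :=
    _root_.exists_isInteger_smul_add_smul_eq_one (R := R) (s : K)
  exact ⟨n, n', ⟨a, Subtype.ext ha⟩, ⟨b, Subtype.ext hb⟩, Subtype.ext h⟩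

theorem map_under (J : Ideal S) : (J.under R).map (algebraMap R S) = J := by
  refine le_antisymm Ideal.map_comap_le fun s hs => ?_
  obtain ⟨n, n', ⟨a, ha⟩, ⟨b, hb⟩, h⟩ := S.exists_isInteger_smul_add_smul_eq_one s
  have haJ : a ∈ J.under R := by rw [Ideal.mem_comap, ha]; exact J.smul_of_tower_mem n hs
  have hbJ : b ∈ J.under R := by rw [Ideal.mem_comap, hb]; exact J.smul_of_tower_mem n' hs
  have hs : s = algebraMap R S a + algebraMap R S b * s := by
    rw [ha, hb]
    simp only [Algebra.smul_def] at h ⊢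
    linear_combination -s * h
  rw [hs]
  exact add_mem (Ideal.mem_map_of_mem _ haJ) (Ideal.mul_mem_right _ _ (Ideal.mem_map_of_mem _ hbJ))

theorem le_ofField_primeCompl_under (Q : Ideal S) [Q.IsPrime] :
    S ≤ ofField K (Q.under R).primeCompl (Q.under R).primeCompl_le_nonZeroDivisors := by
  intro s hs
  obtain ⟨n, n', ⟨a, ha⟩, ⟨b, hb⟩, h⟩ := S.exists_isInteger_smul_add_smul_eq_one ⟨s, hs⟩
  rw [mem_ofField_iff]
  by_cases hnQ : n ∈ Q.under R
  · refine ⟨n', fun hn'Q => ?_, b, congrArg Subtype.val hb⟩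
    refine Ideal.IsPrime.ne_top ‹_› (Q.eq_top_of_isUnit_mem ?_ isUnit_one)
    rw [← h, Algebra.smul_def]
    exact add_mem hnQ (Q.mul_mem_right _ hn'Q)
  · exact ⟨n, hnQ, a, congrArg Subtype.val ha⟩

theorem mem_ofField_of_isIntegral (Q : Ideal S) [Q.IsPrime] {x : K} (hx : IsIntegral S x) :
    x ∈ ofField K (Q.under R).primeCompl (Q.under R).primeCompl_le_nonZeroDivisors := by
  have := IsLocalization.isDedekindDomain R (Q.under R).primeCompl_le_nonZeroDivisors
    (ofField K (Q.under R).primeCompl (Q.under R).primeCompl_le_nonZeroDivisors)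
  obtain ⟨y, rfl⟩ := IsIntegrallyClosed.isIntegral_iff.mp <|
    hx.map_of_comp_eq (inclusion (S.le_ofField_primeCompl_under Q)).toRingHom (RingHom.id K)
      (RingHom.ext fun _ => rfl)
  exact y.2

theorem isIntegrallyClosed : IsIntegrallyClosed S := by
  refine (isIntegrallyClosed_iff K).mpr fun {x} hx => ?_
  have hD : (1 : Submodule S K).colon {x} = ⊤ := by
    by_contra hD
    obtain ⟨Q, hQ, hDQ⟩ := Ideal.exists_le_maximal _ hD
    obtain ⟨u, hu, a, ha⟩ := (mem_ofField_iff _).mp (S.mem_ofField_of_isIntegral Q hx)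
    refine hu (hDQ (Submodule.mem_colon_singleton.mpr
      (Submodule.mem_one.mpr ⟨algebraMap R S a, ?_⟩)))
    rw [← IsScalarTower.algebraMap_apply, ha, algebraMap_smul]
  obtain ⟨y, hy⟩ := Submodule.mem_one.mp <|
    Submodule.mem_colon_singleton.mp (hD ▸ Submodule.mem_top : (1 : S) ∈ _)
  exact ⟨y, hy.trans (one_smul S x)⟩

end Subalgebra

end Overring

theorem overring_isDedekindDomain_general (R : Type*) [CommRing R]
    [IsDedekindDomain R] (K : Type*) [Field K] [Algebra R K] [IsFractionRing R K]
    (S : Subalgebra R K) : IsDedekindDomain S := by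
  have := isNoetherianRing_of_map_under_eq S.map_under
  have := dimensionLEOne_of_map_under_eq S.map_under
  have := S.isIntegrallyClosed
  exact { }

/-- Any overring of a Dedekind domain is a Dedekind domain: if `R` is a Dedekind domain
with fraction field `K` and `S` is an intermediate ring `R ⊆ S ⊆ K`, then `S` is a
Dedekind domain.  (Mathlib's `IsDedekindDomain` allows the field case `S = K`.) -/
theorem overring_isDedekindDomain (R : Type*) [CommRing R] [IsDomain R]
    [IsDedekindDomain R] (K : Type*) [Field K] [Algebra R K] [IsFractionRing R K]
    (S : Subalgebra R K) : IsDedekindDomain S :=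
  overring_isDedekindDomain_general R K S
end

section
/- Let R be a Dedekind domain and S an overring of R. For every nonzero prime ideal 𝒫 of S, the extension of the contracted ideal equals 𝒫: (𝒫 ∩ R)S = 𝒫. -/
/-!
Let `p = 𝒫 ∩ R`; it is nonzero because `S` is algebraic over `R`, hence maximal. Since `R_p`
is a discrete valuation ring, every `x ∈ K` lies in `R_p` or has `x⁻¹ ∈ pR_p`; for `x ∈ S` the
second case would put an element of `R \ p` into `𝒫 ∩ R`, so `S ⊆ R_p`. Thus each `s ∈ 𝒫`
satisfies `bs = a` with `b ∉ p`, whence `a ∈ p`, and `b` is invertible modulo the maximal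
ideal `p`, so `s ∈ pS`.
-/

theorem Ideal.mem_map_of_mul_mem_of_isMaximal {R S : Type*} [CommSemiring R] [CommSemiring S]
    (f : R →+* S) {m : Ideal R} (hm : m.IsMaximal) {b : R} (hb : b ∉ m) {s : S}
    (h : f b * s ∈ m.map f) : s ∈ m.map f := by
  obtain ⟨c, t, ht, hcbt⟩ := hm.exists_inv hb
  have hs : s = f c * (f b * s) + f t * s := by
    rw [← mul_assoc, ← map_mul, ← add_mul, ← map_add, hcbt, map_one, one_mul]
  rw [hs]
  exact add_mem (Ideal.mul_mem_left _ _ h) (Ideal.mul_mem_right _ _ (Ideal.mem_map_of_mem f ht))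

section FractionField

variable {R K : Type*} [CommRing R] [Field K] [Algebra R K]

theorem Subalgebra.comap_ne_bot_of_isFractionRing [IsDomain R] [IsFractionRing R K]
    {S : Subalgebra R K} {Q : Ideal S} (hQ : Q ≠ ⊥) : Q.comap (algebraMap R S) ≠ ⊥ := by
  have : Algebra.IsAlgebraic R K :=
    (IsFractionRing.comap_isAlgebraic_iff (K := K)).mpr inferInstance
  obtain ⟨s, hsQ, hs0⟩ := Submodule.exists_mem_ne_zero_of_ne_bot hQ
  exact Ideal.comap_ne_bot_of_algebraic_mem hs0 hsQ
    (Subalgebra.isAlgebraic_iff_isAlgebraic_val.mpr (Algebra.IsAlgebraic.isAlgebraic _))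

variable [IsDedekindDomain R] [IsFractionRing R K]

theorem IsDedekindDomain.exists_mul_eq_or_exists_mem_mul_eq {p : Ideal R} [p.IsPrime]
    (hp : p ≠ ⊥) (x : K) :
    (∃ a, ∃ b ∉ p, algebraMap R K b * x = algebraMap R K a) ∨
      ∃ a ∈ p, ∃ b ∉ p, algebraMap R K a * x = algebraMap R K b := by
  let Rp := Localization.subalgebra.ofField K p.primeCompl p.primeCompl_le_nonZeroDivisors
  have : IsDiscreteValuationRing Rp :=
    IsLocalization.AtPrime.isDiscreteValuationRing_of_dedekind_domain R hp Rp
  have mem_Rp (y : Rp) : ∃ a, ∃ b ∉ p, algebraMap R K b * y = algebraMap R K a := by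
    obtain ⟨a, b, hb, hy⟩ := y.2
    have hb0 : algebraMap R K b ≠ 0 :=
      IsFractionRing.to_map_ne_zero_of_mem_nonZeroDivisors (p.primeCompl_le_nonZeroDivisors hb)
    exact ⟨a, b, hb, by rw [hy, mul_comm, inv_mul_cancel_right₀ hb0]⟩
  rcases eq_or_ne x 0 with rfl | hx
  · exact .inl ⟨0, 1, p.primeCompl.one_mem, by simp⟩
  rcases ValuationRing.isInteger_or_isInteger Rp x with ⟨y, rfl⟩ | ⟨y, hy⟩
  · exact .inl (mem_Rp y)
  obtain ⟨a, b, hb, hab⟩ := mem_Rp y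
  rw [show (y : K) = x⁻¹ from hy] at hab
  have hab : algebraMap R K a * x = algebraMap R K b := by
    rw [← hab, mul_assoc, inv_mul_cancel₀ hx, mul_one]
  by_cases ha : a ∈ p
  · exact .inr ⟨a, ha, b, hb, hab⟩
  · exact .inl ⟨b, a, ha, hab⟩

theorem Subalgebra.exists_algebraMap_mul_eq_of_comap_ne_bot {S : Subalgebra R K} (Q : Ideal S)
    [(Q.comap (algebraMap R S)).IsPrime] (hQ : Q.comap (algebraMap R S) ≠ ⊥) (s : S) :
    ∃ a, ∃ b ∉ Q.comap (algebraMap R S), algebraMap R S b * s = algebraMap R S a := by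
  rcases IsDedekindDomain.exists_mul_eq_or_exists_mem_mul_eq hQ (s : K) with
    ⟨a, b, hb, h⟩ | ⟨a, ha, b, hb, h⟩
  · exact ⟨a, b, hb, Subtype.ext (by simpa using h)⟩
  · have h : algebraMap R S a * s = algebraMap R S b := Subtype.ext (by simpa using h)
    refine absurd ?_ hb
    rw [Ideal.mem_comap, ← h]
    exact Q.mul_mem_right s ha

end FractionField

theorem overring_map_comap_prime_general (R : Type*) [CommRing R]
    [IsDedekindDomain R] (K : Type*) [Field K] [Algebra R K] [IsFractionRing R K]
    (S : Subalgebra R K) (P : Ideal S) (hP : P.IsPrime) (hP0 : P ≠ ⊥) :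
    (P.comap (algebraMap R S)).map (algebraMap R S) = P := by
  set p := P.comap (algebraMap R S)
  have hp0 : p ≠ ⊥ := Subalgebra.comap_ne_bot_of_isFractionRing hP0
  have : p.IsPrime := hP.comap _
  have hp : p.IsMaximal := this.isMaximal hp0
  refine le_antisymm Ideal.map_comap_le fun s hs ↦ ?_
  obtain ⟨a, b, hb, hab⟩ := Subalgebra.exists_algebraMap_mul_eq_of_comap_ne_bot P hp0 s
  have ha : a ∈ p := by
    rw [Ideal.mem_comap, ← hab]
    exact P.mul_mem_left _ hs
  exact Ideal.mem_map_of_mul_mem_of_isMaximal _ hp hb (hab ▸ Ideal.mem_map_of_mem _ ha)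

/-- Let `R` be a Dedekind domain with fraction field `K` and `S` an overring of `R`.
For every nonzero prime ideal `𝒫` of `S`, the extension of the contraction equals `𝒫`:
`(𝒫 ∩ R) S = 𝒫`. -/
theorem overring_map_comap_prime (R : Type*) [CommRing R] [IsDomain R]
    [IsDedekindDomain R] (K : Type*) [Field K] [Algebra R K] [IsFractionRing R K]
    (S : Subalgebra R K) (P : Ideal S) (hP : P.IsPrime) (hP0 : P ≠ ⊥) :
    (P.comap (algebraMap R S)).map (algebraMap R S) = P :=
  overring_map_comap_prime_general R K S P hP hP0
end

section
/- Every overring of a principal ideal domain is a localization: if R is a PID with fraction field K and S is a ring with R ⊆ S ⊆ K, then there is a multiplicatively closed subset T of R such that S = R[T⁻¹] (i.e., S is the localization of R at T, viewed inside K). -/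
open nonZeroDivisors

/-- Every overring of a PID is a localization: if `R` is a PID with fraction field `K`
and `S` is an intermediate ring `R ⊆ S ⊆ K`, then `S` is the localization of `R` at some
multiplicatively closed subset `T` of `R`. -/
theorem overring_of_pid_is_localization (R : Type*) [CommRing R] [IsDomain R]
    [IsPrincipalIdealRing R] (K : Type*) [Field K] [Algebra R K] [IsFractionRing R K]
    (S : Subalgebra R K) : ∃ T : Submonoid R, IsLocalization T S := by
  set T : Submonoid R :=
    { carrier := {r : R | r ≠ 0 ∧ (algebraMap R K r)⁻¹ ∈ S}
      one_mem' := ⟨one_ne_zero, by simpa using S.one_mem⟩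
      mul_mem' := by
        rintro a b ⟨ha, ha'⟩ ⟨hb, hb'⟩
        refine ⟨mul_ne_zero ha hb, ?_⟩
        rw [map_mul, mul_inv]
        exact S.mul_mem ha' hb' } with hTdef
  have hT : T ≤ R⁰ := fun r hr => mem_nonZeroDivisors_of_ne_zero hr.1
  have key : S = Localization.subalgebra.ofField K T hT := by
    apply le_antisymm
    · intro x hx
      set a : R := IsFractionRing.num R x with ha
      set b : R⁰ := IsFractionRing.den R x with hb
      have hrel : IsRelPrime a (b : R) := IsFractionRing.num_den_reduced R x
      obtain ⟨u, v, huv⟩ := hrel.isCoprime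
      have hbK : algebraMap R K (b : R) ≠ 0 :=
        IsFractionRing.to_map_ne_zero_of_mem_nonZeroDivisors b.2
      have hx' : x * algebraMap R K (b : R) = algebraMap R K a := by
        rw [← IsFractionRing.mk'_num_den' R x, div_mul_cancel₀ _ hbK]
      have hinv : (algebraMap R K (b : R))⁻¹ = algebraMap R K u * x + algebraMap R K v := by
        symm
        apply eq_inv_of_mul_eq_one_left
        rw [add_mul, mul_assoc, hx', ← map_mul, ← map_mul, ← map_add, huv, map_one]
      have hbT : (b : R) ∈ T := by
        refine ⟨nonZeroDivisors.coe_ne_zero b, ?_⟩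
        rw [hinv]
        exact S.add_mem (S.mul_mem (S.algebraMap_mem u) hx) (S.algebraMap_mem v)
      refine ⟨a, b, hbT, ?_⟩
      rw [← IsFractionRing.mk'_num_den' R x, div_eq_mul_inv]
    · rintro x ⟨a, s, hs, rfl⟩
      exact S.mul_mem (S.algebraMap_mem a) hs.2
  refine ⟨T, ?_⟩
  rw [key]
  infer_instance
end

section
/- Every overring of a principal ideal domain is a principal ideal domain. -/
/-- Every overring of a principal ideal domain is a principal ideal domain. -/
theorem overring_of_pid_isPrincipalIdealRing (R : Type*) [CommRing R] [IsDomain R]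
    [IsPrincipalIdealRing R] (K : Type*) [Field K] [Algebra R K] [IsFractionRing R K]
    (S : Subalgebra R K) : IsPrincipalIdealRing S := by
  constructor
  intro I
  obtain ⟨g, hg⟩ := (IsPrincipalIdealRing.principal (I.comap (algebraMap R S))).principal
  rw [Ideal.submodule_span_eq] at hg
  refine ⟨algebraMap R S g, ?_⟩
  rw [Ideal.submodule_span_eq]
  have hginJ : g ∈ I.comap (algebraMap R S) := by
    rw [hg]; exact Ideal.subset_span rfl
  apply le_antisymm
  · intro x hx
    obtain ⟨a, b, hrel, hmk⟩ := IsFractionRing.exists_reduced_fraction R (x : K)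
    obtain ⟨u, v, huv⟩ := hrel.isCoprime
    have hb : algebraMap R K (b : R) ≠ 0 :=
      IsFractionRing.to_map_ne_zero_of_mem_nonZeroDivisors b.2
    have hxval : (x : K) = algebraMap R K a / algebraMap R K (b : R) := by
      rw [← hmk, IsFractionRing.mk'_eq_div]
    have hba : algebraMap R K (b : R) * (x : K) = algebraMap R K a := by
      rw [hxval]; field_simp
    -- s = 1/b lies in S
    set s : S := algebraMap R S u * x + algebraMap R S v with hs
    have hsK : (s : K) = algebraMap R K u * (x : K) + algebraMap R K v := by
      push_cast [hs]; rfl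
    have hsval : (s : K) * algebraMap R K (b : R) = 1 := by
      rw [hsK]
      have h2 : (algebraMap R K u * (x : K) + algebraMap R K v) * algebraMap R K (b : R)
          = algebraMap R K (u * a + v * b) := by
        push_cast [map_add, map_mul]
        linear_combination (algebraMap R K u) * hba
      rw [h2, huv, map_one]
    -- a = b * x ∈ I, hence a ∈ J
    have haI : algebraMap R S a ∈ I := by
      have h3 : algebraMap R S a = algebraMap R S (b : R) * x := by
        apply Subtype.ext
        push_cast
        rw [← hba]
      rw [h3]
      exact I.mul_mem_left _ hx
    have haJ : a ∈ I.comap (algebraMap R S) := haI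
    rw [hg, Ideal.mem_span_singleton] at haJ
    obtain ⟨c, hc⟩ := haJ
    -- x = g * (c * s)
    rw [Ideal.mem_span_singleton]
    refine ⟨algebraMap R S c * s, ?_⟩
    apply Subtype.ext
    push_cast
    have hsinv : (s : K) = (algebraMap R K (b : R))⁻¹ := by
      field_simp at hsval ⊢
      linear_combination hsval
    rw [hxval, hsinv, hc]
    push_cast [map_mul]
    field_simp
  · rw [Ideal.span_le, Set.singleton_subset_iff]
    exact hginJ
end

section
/- Let R be a Dedekind domain and S an overring of R. Then the induced pushforward map ι₊ : Pic(R) → Pic(S) on ideal class groups, sending the class of a fractional ideal I to the class of IS, is a surjective group homomorphism. -/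
/-!
An overring `S` of `R` has the same fraction field `K`, so a finitely generated fractional ideal
of `S` is the extension of the `R`-span of the same generators in `K`. Since `S` is Noetherian,
every ideal class of `S` is therefore represented by the extension of a fractional ideal of `R`,
which is an integral ideal of `R` up to a principal factor.
-/

open scoped nonZeroDivisors

open FractionalIdeal Submodule

section

variable {A K : Type*} [CommRing A] [Field K] [Algebra A K] [IsFractionRing A K]

theorem Subalgebra.nonZeroDivisors_le_comap_nonZeroDivisors [IsDomain A] (B : Subalgebra A K) :
    A⁰ ≤ B⁰.comap (algebraMap A B) :=
  nonZeroDivisors_le_comap_nonZeroDivisors_of_injective _ (FaithfulSMul.algebraMap_injective A B)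

theorem IsLocalization.map_subalgebra_eq_id [IsDomain A] (B : Subalgebra A K) :
    IsLocalization.map K (algebraMap A B) B.nonZeroDivisors_le_comap_nonZeroDivisors =
      RingHom.id K :=
  IsLocalization.ringHom_ext A⁰ <| RingHom.ext fun a ↦ by
    simp [← IsScalarTower.algebraMap_apply A B K]

namespace FractionalIdeal

variable [IsDomain A] (B : Subalgebra A K)

theorem coe_extended_subalgebra (I : FractionalIdeal A⁰ K) :
    (I.extended K B.nonZeroDivisors_le_comap_nonZeroDivisors : Submodule B K) =
      span B (I : Set K) := by
  rw [coe_extended_eq_span, IsLocalization.map_subalgebra_eq_id, RingHom.coe_id, Set.image_id]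

theorem exists_extended_eq_of_fg (J : FractionalIdeal B⁰ K) (hJ : (J : Submodule B K).FG) :
    ∃ I : FractionalIdeal A⁰ K, I.extended K B.nonZeroDivisors_le_comap_nonZeroDivisors = J := by
  obtain ⟨s, hs⟩ := hJ
  refine ⟨⟨span A s, isFractional_of_fg (fg_span s.finite_toSet)⟩, coeToSubmodule_inj.mp ?_⟩
  exact (coe_extended_subalgebra B _).trans ((span_span_of_tower A B _).trans hs)

end FractionalIdeal

namespace ClassGroup

theorem extendedHom_subalgebra_surjective [IsDedekindDomain A] (B : Subalgebra A K)
    [IsDedekindDomain B] : Function.Surjective (extendedHom A B) := by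
  intro c
  obtain ⟨J, rfl⟩ := mk0_surjective c
  obtain ⟨F, hF⟩ := exists_extended_eq_of_fg B (J : FractionalIdeal B⁰ K)
    (fg_of_isNoetherianRing le_rfl _)
  obtain ⟨a, I, ha, rfl⟩ := exists_eq_spanSingleton_mul F
  have hI : I ∈ (Ideal A)⁰ := by
    refine mem_nonZeroDivisors_of_ne_zero fun hI0 ↦ nonZeroDivisors.coe_ne_zero J ?_
    refine (coeIdeal_eq_zero (K := K)).mp ?_
    rw [← hF, hI0, Ideal.zero_eq_bot, coeIdeal_bot, mul_zero, extended_zero]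
  refine ⟨mk0 ⟨I, hI⟩, ?_⟩
  rw [extendedHom_mk0, mk0_eq_mk0_iff_exists_fraction_ring (K := K)]
  refine ⟨(algebraMap A K a)⁻¹, by simpa using ha, ?_⟩
  rw [← hF, extended_mul, extended_spanSingleton, extended_coeIdeal_eq_map,
    IsLocalization.map_subalgebra_eq_id]
  rfl

end ClassGroup

end

theorem classGroup_pushforward_surjective_general (R : Type*) [CommRing R]
    [IsDedekindDomain R] (K : Type*) [Field K] [Algebra R K] [IsFractionRing R K]
    (S : Subalgebra R K) [IsDedekindDomain S] :
    ∃ f : ClassGroup R →* ClassGroup S,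
      Function.Surjective f ∧
      ∀ (I : Ideal R) (hI : I ∈ (Ideal R)⁰)
        (hJ : I.map (algebraMap R S) ∈ (Ideal S)⁰),
        f (ClassGroup.mk0 ⟨I, hI⟩) = ClassGroup.mk0 ⟨I.map (algebraMap R S), hJ⟩ :=
  ⟨ClassGroup.extendedHom R S, ClassGroup.extendedHom_subalgebra_surjective S,
    fun I hI _ ↦ ClassGroup.extendedHom_mk0 R S ⟨I, hI⟩⟩

/-- Let `R` be a Dedekind domain with fraction field `K` and `S` an overring of `R`
(which is again a Dedekind domain).  The pushforward map `Pic(R) → Pic(S)`, sending the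
class of a nonzero ideal `I` of `R` to the class of `IS`, is a (well-defined) surjective
group homomorphism. -/
theorem classGroup_pushforward_surjective (R : Type*) [CommRing R] [IsDomain R]
    [IsDedekindDomain R] (K : Type*) [Field K] [Algebra R K] [IsFractionRing R K]
    (S : Subalgebra R K) [IsDedekindDomain S] :
    ∃ f : ClassGroup R →* ClassGroup S,
      Function.Surjective f ∧
      ∀ (I : Ideal R) (hI : I ∈ (Ideal R)⁰)
        (hJ : I.map (algebraMap R S) ∈ (Ideal S)⁰),
        f (ClassGroup.mk0 ⟨I, hI⟩) = ClassGroup.mk0 ⟨I.map (algebraMap R S), hJ⟩ :=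
  classGroup_pushforward_surjective_general R K S
end

section
/- Let R be a Dedekind domain and S an overring of R. The kernel of the pushforward map ι₊ : Pic(R) → Pic(S) is the subgroup of Pic(R) generated by the classes of those nonzero prime ideals 𝔭 of R with 𝔭S = S. Hence Pic(S) ≅ Pic(R)/H where H is that subgroup. -/
/-!
Let `𝔭` be a nonzero prime of `R` with `𝔭S ≠ S`. Since `R_𝔭` is a valuation ring, every `s ∈ S`
lies in `R_𝔭`, so `IS ⊆ IR_𝔭`; as `𝔭ᵏ` is `𝔭`-primary, `IS = JS` then forces `I` and `J` to
have the same `𝔭`-adic valuation. Hence if `IS = sS` is principal, writing `s = n / d` the ideals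
`I·(d)` and `(n)` differ only at primes `𝔭` with `𝔭S = S`, and `[I]` lies in the subgroup
generated by their classes. Conversely such a `𝔭` has `𝔭S = S` principal, and the isomorphism
is the first isomorphism theorem for the surjection `ι₊`.
-/

open scoped nonZeroDivisors

open IsDedekindDomain UniqueFactorizationMonoid

namespace Ideal

variable {R S : Type*} [CommRing R] [CommRing S] [Algebra R S]

theorem exists_mul_algebraMap_eq_of_mem_map (M : Submonoid R)
    (hS : ∀ s : S, ∃ (n : R) (d : M), s * algebraMap R S d = algebraMap R S n)
    {I : Ideal R} {y : S} (hy : y ∈ I.map (algebraMap R S)) :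
    ∃ n ∈ I, ∃ d : M, y * algebraMap R S d = algebraMap R S n := by
  induction hy using Submodule.span_induction with
  | mem _ hy =>
    obtain ⟨n, hn, rfl⟩ := hy
    exact ⟨n, hn, 1, by simp⟩
  | zero => exact ⟨0, I.zero_mem, 1, by simp⟩
  | add y₁ y₂ _ _ ih₁ ih₂ =>
    obtain ⟨n₁, hn₁, d₁, h₁⟩ := ih₁
    obtain ⟨n₂, hn₂, d₂, h₂⟩ := ih₂
    refine ⟨n₁ * d₂ + n₂ * d₁, I.add_mem (I.mul_mem_right _ hn₁) (I.mul_mem_right _ hn₂),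
      d₁ * d₂, ?_⟩
    simp only [Submonoid.coe_mul, map_mul, map_add, ← h₁, ← h₂]
    ring
  | smul s y _ ih =>
    obtain ⟨n, hn, d, h⟩ := ih
    obtain ⟨m, e, hs⟩ := hS s
    refine ⟨m * n, I.mul_mem_left _ hn, e * d, ?_⟩
    simp only [smul_eq_mul, Submonoid.coe_mul, map_mul, ← h, ← hs]
    ring

theorem map_mem_nonZeroDivisors_iff [IsDomain R] [IsDomain S]
    (hinj : Function.Injective (algebraMap R S)) {I : Ideal R} :
    I.map (algebraMap R S) ∈ (Ideal S)⁰ ↔ I ∈ (Ideal R)⁰ := by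
  simp only [mem_nonZeroDivisors_iff_ne_zero, Ne, zero_eq_bot, map_eq_bot_iff_of_injective hinj]

variable [IsDedekindDomain R]

theorem filter_normalizedFactors_eq_of_count_eq (P : Ideal R → Prop) [DecidablePred P]
    {I J : Ideal R} (hIJ : ∀ 𝔭 : Ideal R, 𝔭.IsPrime → 𝔭 ≠ ⊥ → P 𝔭 →
      (normalizedFactors I).count 𝔭 = (normalizedFactors J).count 𝔭) :
    (normalizedFactors I).filter P = (normalizedFactors J).filter P := by
  ext 𝔭
  simp only [Multiset.count_filter]
  split_ifs with h𝔭
  · by_cases hmem : 𝔭 ∈ normalizedFactors I ∨ 𝔭 ∈ normalizedFactors J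
    · have hprime : Prime 𝔭 :=
        hmem.elim (prime_of_normalized_factor 𝔭) (prime_of_normalized_factor 𝔭)
      exact hIJ 𝔭 (isPrime_of_prime hprime) hprime.ne_zero h𝔭
    · push Not at hmem
      rw [Multiset.count_eq_zero_of_notMem hmem.1, Multiset.count_eq_zero_of_notMem hmem.2]
  · rfl

variable {𝔭 : Ideal R} [𝔭.IsPrime]

theorem le_pow_of_map_le
    (hS : ∀ s : S, ∃ (n : R) (d : 𝔭.primeCompl), s * algebraMap R S d = algebraMap R S n)
    (hinj : Function.Injective (algebraMap R S)) {I J : Ideal R}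
    (hJI : J.map (algebraMap R S) ≤ I.map (algebraMap R S)) {k : ℕ} (hI : I ≤ 𝔭 ^ k) :
    J ≤ 𝔭 ^ k := by
  intro x hx
  obtain ⟨n, hn, d, h⟩ :=
    exists_mul_algebraMap_eq_of_mem_map 𝔭.primeCompl hS (hJI (mem_map_of_mem _ hx))
  rw [← map_mul] at h
  have hxd : x * d ∈ 𝔭 ^ k := hinj h ▸ hI hn
  exact (IsPrime.mem_pow_mul 𝔭 hxd).resolve_right d.2

theorem count_normalizedFactors_eq_of_map_eq
    (hS : ∀ s : S, ∃ (n : R) (d : 𝔭.primeCompl), s * algebraMap R S d = algebraMap R S n)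
    (hinj : Function.Injective (algebraMap R S)) (h𝔭 : 𝔭 ≠ ⊥) {I J : Ideal R}
    (hI : I ≠ ⊥) (hJ : J ≠ ⊥) (hIJ : I.map (algebraMap R S) = J.map (algebraMap R S)) :
    (normalizedFactors I).count 𝔭 = (normalizedFactors J).count 𝔭 := by
  have h𝔭irr : Irreducible 𝔭 := (prime_of_isPrime h𝔭 ‹_›).irreducible
  have hmult : emultiplicity 𝔭 I = emultiplicity 𝔭 J :=
    emultiplicity_eq_emultiplicity_iff.mpr fun k => by
      simp only [dvd_iff_le]
      exact ⟨le_pow_of_map_le hS hinj hIJ.ge, le_pow_of_map_le hS hinj hIJ.le⟩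
  rwa [emultiplicity_eq_count_normalizedFactors h𝔭irr hI,
    emultiplicity_eq_count_normalizedFactors h𝔭irr hJ, normalize_eq, Nat.cast_inj] at hmult

end Ideal

namespace IsDedekindDomain.HeightOneSpectrum

variable {R K : Type*} [CommRing R] [IsDedekindDomain R] [Field K] [Algebra R K]
  [IsFractionRing R K]

theorem exists_primeCompl_mul_eq_of_map_ne_top {S : Subalgebra R K} (v : HeightOneSpectrum R)
    (hv : v.asIdeal.map (algebraMap R S) ≠ ⊤) (s : S) :
    ∃ (n : R) (d : v.asIdeal.primeCompl), s * algebraMap R S d = algebraMap R S n := by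
  obtain ⟨n, d, h | h⟩ := v.exists_primeCompl_mul_eq_or_mul_eq (s : K)
  · exact ⟨n, d, Subtype.ext h⟩
  -- if `s = d / n` with `n ∈ 𝔭`, then `d ∈ 𝔭S ∩ R`, which is `𝔭` by maximality
  · refine ⟨d, ⟨n, fun hn => d.2 ?_⟩, Subtype.ext h⟩
    have hd : algebraMap R S d ∈ v.asIdeal.map (algebraMap R S) := by
      rw [show algebraMap R S d = s * algebraMap R S n from Subtype.ext h.symm]
      exact Ideal.mul_mem_left _ _ (Ideal.mem_map_of_mem _ hn)
    exact (v.isMaximal.eq_of_le (Ideal.comap_ne_top _ hv) Ideal.le_comap_map).ge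
      (Ideal.mem_comap.mpr hd)

end IsDedekindDomain.HeightOneSpectrum

namespace ClassGroup

variable {R : Type*} [CommRing R] [IsDedekindDomain R]

def primeClasses (P : Ideal R → Prop) : Set (ClassGroup R) :=
  {c | ∃ 𝔭 : (Ideal R)⁰, (𝔭 : Ideal R).IsPrime ∧ P 𝔭 ∧ c = mk0 𝔭}

theorem mk0_multiset_prod_mem {H : Subgroup (ClassGroup R)} {m : Multiset (Ideal R)}
    (hm : ∀ p ∈ m, ∀ hp : p ∈ (Ideal R)⁰, mk0 ⟨p, hp⟩ ∈ H) (h : m.prod ∈ (Ideal R)⁰) :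
    mk0 ⟨m.prod, h⟩ ∈ H := by
  induction m using Multiset.induction_on with
  | empty =>
    convert H.one_mem
    exact map_one mk0
  | cons p m ih =>
    obtain ⟨hp, hm'⟩ := mul_mem_nonZeroDivisors.mp (Multiset.prod_cons p m ▸ h)
    have hsplit : (⟨(p ::ₘ m).prod, h⟩ : (Ideal R)⁰) = ⟨p, hp⟩ * ⟨m.prod, hm'⟩ :=
      Subtype.ext (Multiset.prod_cons p m)
    rw [hsplit, map_mul]
    exact mul_mem (hm p (Multiset.mem_cons_self p m) hp)
      (ih (fun q hq => hm q (Multiset.mem_cons_of_mem hq)) hm')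

theorem mk0_prod_filter_normalizedFactors_mem_closure (P : Ideal R → Prop) [DecidablePred P]
    (I : Ideal R) (hI : ((normalizedFactors I).filter P).prod ∈ (Ideal R)⁰) :
    mk0 ⟨_, hI⟩ ∈ Subgroup.closure (primeClasses P) := by
  refine mk0_multiset_prod_mem (fun 𝔭 h𝔭 h𝔭0 => Subgroup.subset_closure ?_) hI
  rw [Multiset.mem_filter] at h𝔭
  exact ⟨⟨𝔭, h𝔭0⟩, Ideal.isPrime_of_prime (prime_of_normalized_factor 𝔭 h𝔭.1), h𝔭.2, rfl⟩

theorem mk0_div_mk0_mem_closure_primeClasses (P : Ideal R → Prop) {I J : (Ideal R)⁰}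
    (hIJ : ∀ 𝔭 : Ideal R, 𝔭.IsPrime → 𝔭 ≠ ⊥ → ¬P 𝔭 →
      (normalizedFactors (I : Ideal R)).count 𝔭 = (normalizedFactors (J : Ideal R)).count 𝔭) :
    mk0 I / mk0 J ∈ Subgroup.closure (primeClasses P) := by
  classical
  have hfactor : ∀ L : (Ideal R)⁰, ((normalizedFactors (L : Ideal R)).filter P).prod *
      ((normalizedFactors (L : Ideal R)).filter (¬P ·)).prod = L := fun L => by
    rw [Multiset.prod_filter_mul_prod_filter_not,
      Ideal.prod_normalizedFactors_eq_self (nonZeroDivisors.coe_ne_zero L)]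
  have hD : ∀ L : (Ideal R)⁰, ((normalizedFactors (L : Ideal R)).filter P).prod ∈ (Ideal R)⁰ :=
    fun L => (mul_mem_nonZeroDivisors.mp ((hfactor L).symm ▸ L.2)).1
  have hcross : mk0 I * mk0 ⟨_, hD J⟩ = mk0 ⟨_, hD I⟩ * mk0 J := by
    rw [← map_mul, ← map_mul]
    congr 1
    ext1
    simp only [Submonoid.coe_mul]
    conv_lhs => rw [← hfactor I, Ideal.filter_normalizedFactors_eq_of_count_eq _ hIJ]
    conv_rhs => rw [← hfactor J]
    ring
  rw [div_eq_div_iff_mul_eq_mul.mpr hcross]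
  exact div_mem (mk0_prod_filter_normalizedFactors_mem_closure P _ (hD I))
    (mk0_prod_filter_normalizedFactors_mem_closure P _ (hD J))

variable {K : Type*} [Field K] [Algebra R K] [IsFractionRing R K] (S : Subalgebra R K)

theorem mk0_div_mk0_mem_closure_of_map_eq {I J : (Ideal R)⁰}
    (hIJ : (I : Ideal R).map (algebraMap R S) = (J : Ideal R).map (algebraMap R S)) :
    mk0 I / mk0 J ∈
      Subgroup.closure (primeClasses fun 𝔭 => 𝔭.map (algebraMap R S) = ⊤) :=
  mk0_div_mk0_mem_closure_primeClasses _ fun 𝔭 h𝔭 h𝔭0 hsurv =>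
    Ideal.count_normalizedFactors_eq_of_map_eq
      (HeightOneSpectrum.exists_primeCompl_mul_eq_of_map_ne_top ⟨𝔭, h𝔭, h𝔭0⟩ hsurv)
      (FaithfulSMul.algebraMap_injective R S) h𝔭0 (nonZeroDivisors.coe_ne_zero I)
      (nonZeroDivisors.coe_ne_zero J) hIJ

theorem mk0_mem_closure_of_isPrincipal_map {I : (Ideal R)⁰}
    (hI : ((I : Ideal R).map (algebraMap R S)).IsPrincipal) :
    mk0 I ∈ Subgroup.closure (primeClasses fun 𝔭 => 𝔭.map (algebraMap R S) = ⊤) := by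
  have hinj := FaithfulSMul.algebraMap_injective R S
  obtain ⟨s, hs⟩ := hI
  obtain ⟨⟨n, d⟩, hnd⟩ := IsLocalization.surj R⁰ (s : K)
  have hd : Ideal.span {(d : R)} ∈ (Ideal R)⁰ :=
    mem_nonZeroDivisors_of_ne_zero (by simp)
  have hId : (I : Ideal R) * Ideal.span {(d : R)} ∈ (Ideal R)⁰ := mul_mem I.2 hd
  have hmap : ((I : Ideal R) * Ideal.span {(d : R)}).map (algebraMap R S) =
      (Ideal.span {n}).map (algebraMap R S) := by
    rw [Ideal.map_mul, hs, Ideal.submodule_span_eq, Ideal.map_span, Ideal.map_span,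
      Set.image_singleton, Set.image_singleton, Ideal.span_singleton_mul_span_singleton]
    exact congrArg (fun x => Ideal.span {x}) (Subtype.ext hnd)
  have hn : Ideal.span {n} ∈ (Ideal R)⁰ := by
    rw [← Ideal.map_mem_nonZeroDivisors_iff hinj, ← hmap, Ideal.map_mem_nonZeroDivisors_iff hinj]
    exact hId
  have hprincipal : ∀ (x : R) (hx : Ideal.span {x} ∈ (Ideal R)⁰), mk0 ⟨_, hx⟩ = 1 :=
    fun x hx => (mk0_eq_one_iff hx).mpr ⟨⟨x, rfl⟩⟩
  have key := mk0_div_mk0_mem_closure_of_map_eq S (I := ⟨_, hId⟩) (J := ⟨_, hn⟩) hmap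
  rwa [show (⟨_, hId⟩ : (Ideal R)⁰) = I * ⟨_, hd⟩ from rfl, map_mul, hprincipal, hprincipal,
    mul_one, div_one] at key

end ClassGroup

theorem classGroup_pushforward_kernel_general (R : Type*) [CommRing R]
    [IsDedekindDomain R] (K : Type*) [Field K] [Algebra R K] [IsFractionRing R K]
    (S : Subalgebra R K) [IsDedekindDomain S]
    (f : ClassGroup R →* ClassGroup S)
    (hf : ∀ (I : Ideal R) (hI : I ∈ (Ideal R)⁰)
      (hJ : I.map (algebraMap R S) ∈ (Ideal S)⁰),
      f (ClassGroup.mk0 ⟨I, hI⟩) = ClassGroup.mk0 ⟨I.map (algebraMap R S), hJ⟩)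
    (hsurj : Function.Surjective f) :
    f.ker = Subgroup.closure {c : ClassGroup R | ∃ 𝔭 : (Ideal R)⁰,
        (𝔭 : Ideal R).IsPrime ∧ (𝔭 : Ideal R).map (algebraMap R S) = ⊤ ∧
        c = ClassGroup.mk0 𝔭} ∧
      Nonempty (ClassGroup S ≃*
        ClassGroup R ⧸ Subgroup.closure {c : ClassGroup R | ∃ 𝔭 : (Ideal R)⁰,
          (𝔭 : Ideal R).IsPrime ∧ (𝔭 : Ideal R).map (algebraMap R S) = ⊤ ∧
          c = ClassGroup.mk0 𝔭}) := by
  have hmap : ∀ I ∈ (Ideal R)⁰, I.map (algebraMap R S) ∈ (Ideal S)⁰ := fun _ hI =>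
    (Ideal.map_mem_nonZeroDivisors_iff (FaithfulSMul.algebraMap_injective R S)).mpr hI
  have hker : f.ker =
      Subgroup.closure (ClassGroup.primeClasses fun 𝔭 => 𝔭.map (algebraMap R S) = ⊤) := by
    refine le_antisymm (fun c hc => ?_) ((Subgroup.closure_le _).mpr ?_)
    · obtain ⟨⟨I, hI⟩, rfl⟩ := ClassGroup.mk0_surjective c
      rw [MonoidHom.mem_ker, hf I hI (hmap I hI), ClassGroup.mk0_eq_one_iff] at hc
      exact ClassGroup.mk0_mem_closure_of_isPrincipal_map S hc
    · rintro _ ⟨⟨𝔭, h𝔭⟩, -, hdies, rfl⟩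
      rw [SetLike.mem_coe, MonoidHom.mem_ker, hf 𝔭 h𝔭 (hmap 𝔭 h𝔭), ClassGroup.mk0_eq_one_iff]
      exact hdies ▸ ⟨⟨1, Ideal.span_singleton_one.symm⟩⟩
  exact ⟨hker, ⟨(QuotientGroup.quotientKerEquivOfSurjective f hsurj).symm.trans
    (QuotientGroup.quotientMulEquivOfEq hker)⟩⟩

/-- Let `R` be a Dedekind domain with fraction field `K` and `S` an overring of `R`.
If `f : Pic(R) → Pic(S)` is the pushforward homomorphism (sending the class of a nonzero
ideal `I` of `R` to the class of `IS`), then its kernel is the subgroup `H` of `Pic(R)`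
generated by the classes of the nonzero prime ideals `𝔭` of `R` with `𝔭S = S`; hence
`Pic(S) ≅ Pic(R)/H`. -/
theorem classGroup_pushforward_kernel (R : Type*) [CommRing R] [IsDomain R]
    [IsDedekindDomain R] (K : Type*) [Field K] [Algebra R K] [IsFractionRing R K]
    (S : Subalgebra R K) [IsDedekindDomain S]
    (f : ClassGroup R →* ClassGroup S)
    (hf : ∀ (I : Ideal R) (hI : I ∈ (Ideal R)⁰)
      (hJ : I.map (algebraMap R S) ∈ (Ideal S)⁰),
      f (ClassGroup.mk0 ⟨I, hI⟩) = ClassGroup.mk0 ⟨I.map (algebraMap R S), hJ⟩)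
    (hsurj : Function.Surjective f) :
    f.ker = Subgroup.closure {c : ClassGroup R | ∃ 𝔭 : (Ideal R)⁰,
        (𝔭 : Ideal R).IsPrime ∧ (𝔭 : Ideal R).map (algebraMap R S) = ⊤ ∧
        c = ClassGroup.mk0 𝔭} ∧
      Nonempty (ClassGroup S ≃*
        ClassGroup R ⧸ Subgroup.closure {c : ClassGroup R | ∃ 𝔭 : (Ideal R)⁰,
          (𝔭 : Ideal R).IsPrime ∧ (𝔭 : Ideal R).map (algebraMap R S) = ⊤ ∧
          c = ClassGroup.mk0 𝔭}) :=
  classGroup_pushforward_kernel_general R K S f hf hsurj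
end

section
/- Let R be a Dedekind domain that is 'replete', i.e., every ideal class of R contains a nonzero prime ideal. Then for every subgroup H of Pic(R) there exists an overring S of R with Pic(S) isomorphic to Pic(R)/H. -/
/-!
Localize `R` at the multiplicative set `M` of nonzero elements all of whose prime divisors have
class in `H`; this is the overring `⋂ {R_𝔭 : [𝔭] ∉ H}`. For any localization `B` of a Dedekind
domain at `M`, extension of ideals `Pic(R) → Pic(B)` is onto (`J = (J ∩ R)B`), and its kernel is
generated by the classes of the primes meeting `M`: if `IB` is principal, say `IB = aB` with
`a ∈ R`, then `I` and `aR` share the saturation `IB ∩ R` up to factors all of whose primes meet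
`M`. For our `M` those classes lie in `H`, and repleteness gives the converse: for `c ∈ H`
choose primes `𝔭 ∈ c`, `𝔮 ∈ c⁻¹`; then `𝔭𝔮 = xR` with `x ∈ M ∩ 𝔭`.
-/

open scoped nonZeroDivisors

namespace ClassGroup

variable {R : Type*} [CommRing R] [IsDedekindDomain R]

noncomputable def primeClassesMeeting (M : Submonoid R) : Subgroup (ClassGroup R) :=
  Subgroup.closure {c | ∃ P : (Ideal R)⁰, (P : Ideal R).IsPrime ∧
    (∃ m ∈ M, m ∈ (P : Ideal R)) ∧ mk0 P = c}

theorem mk0_mem_primeClassesMeeting {M : Submonoid R} (I : (Ideal R)⁰)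
    (hI : ∀ P : Ideal R, P.IsPrime → (I : Ideal R) ≤ P → ∃ m ∈ M, m ∈ P) :
    mk0 I ∈ primeClassesMeeting M := by
  obtain ⟨I, hI0⟩ := I
  induction I using UniqueFactorizationMonoid.induction_on_prime with
  | h₁ => exact absurd rfl (nonZeroDivisors.ne_zero hI0)
  | h₂ u hu =>
    obtain rfl : u = ⊤ := Ideal.isUnit_iff.mp hu
    rw [(mk0_eq_one_iff hI0).mpr ⟨⟨1, by simp⟩⟩]
    exact Subgroup.one_mem _
  | h₃ J P hJ hP ih =>
    have hP0 : P ∈ (Ideal R)⁰ := mem_nonZeroDivisors_of_ne_zero hP.ne_zero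
    have hJ0 : J ∈ (Ideal R)⁰ := mem_nonZeroDivisors_of_ne_zero hJ
    have hPJ : (⟨P * J, hI0⟩ : (Ideal R)⁰) = ⟨P, hP0⟩ * ⟨J, hJ0⟩ := rfl
    rw [hPJ, map_mul]
    refine Subgroup.mul_mem _ (Subgroup.subset_closure ⟨⟨P, hP0⟩, Ideal.isPrime_of_prime hP,
      hI P (Ideal.isPrime_of_prime hP) Ideal.mul_le_left, rfl⟩) (ih hJ0 ?_)
    exact fun Q hQ hJQ => hI Q hQ (le_trans Ideal.mul_le_right hJQ)

section Localization

variable (M : Submonoid R) (B : Type*) [CommRing B] [IsDedekindDomain B] [Algebra R B]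
  [IsLocalization M B] [Module.IsTorsionFree R B]

theorem exists_comap_map_mul_eq (I : (Ideal R)⁰) :
    ∃ C : (Ideal R)⁰, ((I : Ideal R).map (algebraMap R B)).comap (algebraMap R B) * C = I ∧
      ∀ P : Ideal R, P.IsPrime → (C : Ideal R) ≤ P → ∃ m ∈ M, m ∈ P := by
  set T := ((I : Ideal R).map (algebraMap R B)).comap (algebraMap R B)
  obtain ⟨C, hC⟩ : T ∣ I := Ideal.dvd_iff_le.mpr Ideal.le_comap_map
  have hC0 : C ∈ (Ideal R)⁰ := mem_nonZeroDivisors_of_ne_zero fun h =>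
    nonZeroDivisors.ne_zero I.2 (by rw [hC, h, mul_zero])
  refine ⟨⟨C, hC0⟩, hC.symm, fun P hP hCP => ?_⟩
  by_contra! hdisj
  -- `map I = map T * map C = map I * map C` forces `map C = ⊤`, but `map C ≤ map P ≠ ⊤`.
  have hmapC : C.map (algebraMap R B) = 1 := by
    have hT : T.map (algebraMap R B) = (I : Ideal R).map (algebraMap R B) :=
      IsLocalization.map_under M B _
    have hI : (I : Ideal R).map (algebraMap R B) * C.map (algebraMap R B) =
        (I : Ideal R).map (algebraMap R B) * 1 := by
      rw [mul_one, ← hT, ← Ideal.map_mul, ← hC, hT]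
    exact mul_left_cancel₀ (Ideal.map_ne_bot_of_ne_bot (nonZeroDivisors.ne_zero I.2)) hI
  have hPB := IsLocalization.isPrime_of_isPrime_disjoint M B P hP (Set.disjoint_left.mpr hdisj)
  exact hPB.ne_top (top_le_iff.mp (Ideal.one_eq_top (R := B) ▸ hmapC ▸ Ideal.map_mono hCP))

theorem mk0_div_mk0_mem_of_map_eq {I J : (Ideal R)⁰}
    (hIJ : (I : Ideal R).map (algebraMap R B) = (J : Ideal R).map (algebraMap R B)) :
    mk0 I / mk0 J ∈ primeClassesMeeting M := by
  obtain ⟨C₁, hC₁, hC₁M⟩ := exists_comap_map_mul_eq M B I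
  obtain ⟨C₂, hC₂, hC₂M⟩ := exists_comap_map_mul_eq M B J
  set T := ((I : Ideal R).map (algebraMap R B)).comap (algebraMap R B)
  have hT0 : T ∈ (Ideal R)⁰ := mem_nonZeroDivisors_of_ne_zero fun h =>
    nonZeroDivisors.ne_zero I.2 (by rw [← hC₁, h, zero_mul])
  have hI : I = ⟨T, hT0⟩ * C₁ := Subtype.ext hC₁.symm
  have hJ : J = ⟨T, hT0⟩ * C₂ := Subtype.ext (by rw [← hC₂, ← hIJ]; rfl)
  rw [hI, hJ, map_mul, map_mul, mul_div_mul_left_eq_div]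
  exact Subgroup.div_mem _ (mk0_mem_primeClassesMeeting C₁ hC₁M)
    (mk0_mem_primeClassesMeeting C₂ hC₂M)

theorem ker_extendedHom_of_isLocalization :
    (extendedHom R B).ker = primeClassesMeeting M := by
  apply le_antisymm
  · intro c hc
    obtain ⟨I, rfl⟩ := mk0_surjective c
    rw [MonoidHom.mem_ker, extendedHom_mk0] at hc
    obtain ⟨⟨y, hy⟩⟩ := (mk0_eq_one_iff (extendedIdeal R B I).2).mp hc
    obtain ⟨⟨a, m⟩, rfl⟩ := IsLocalization.mk'_surjective M y
    have hmap : (I : Ideal R).map (algebraMap R B) = (Ideal.span {a}).map (algebraMap R B) := by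
      rw [Ideal.map_span, Set.image_singleton, ← IsLocalization.mk'_spec B a m,
        Ideal.span_singleton_mul_right_unit (IsLocalization.map_units B m)]
      exact hy
    have ha0 : Ideal.span {a} ∈ (Ideal R)⁰ := mem_nonZeroDivisors_of_ne_zero fun h =>
      Ideal.map_ne_bot_of_ne_bot (S := B) (nonZeroDivisors.ne_zero I.2)
        (by rw [hmap, h]; exact Ideal.map_bot)
    have ha1 : mk0 ⟨Ideal.span {a}, ha0⟩ = 1 := (mk0_eq_one_iff ha0).mpr ⟨⟨a, rfl⟩⟩
    simpa [ha1] using mk0_div_mk0_mem_of_map_eq M B (J := ⟨_, ha0⟩) hmap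
  · refine (Subgroup.closure_le _).mpr ?_
    rintro _ ⟨P, -, ⟨m, hmM, hmP⟩, rfl⟩
    rw [SetLike.mem_coe, MonoidHom.mem_ker, extendedHom_mk0, mk0_eq_one_iff]
    refine ⟨⟨1, ?_⟩⟩
    simpa [Ideal.eq_top_iff_one, Ideal.submodule_span_eq] using Ideal.eq_top_of_isUnit_mem _
      (Ideal.mem_map_of_mem _ hmP) (IsLocalization.map_units B ⟨m, hmM⟩)

include M in
theorem extendedHom_surjective_of_isLocalization : Function.Surjective (extendedHom R B) := by
  intro c
  obtain ⟨J, rfl⟩ := mk0_surjective c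
  have hJ : (J : Ideal B).comap (algebraMap R B) ∈ (Ideal R)⁰ :=
    mem_nonZeroDivisors_of_ne_zero fun h => nonZeroDivisors.ne_zero J.2 <| by
      rw [← IsLocalization.map_under M B (J : Ideal B), Ideal.under_def, h]
      exact Ideal.map_bot
  refine ⟨mk0 ⟨_, hJ⟩, ?_⟩
  rw [extendedHom_mk0]
  exact congrArg mk0 (Subtype.ext (IsLocalization.map_under M B _))

noncomputable def mulEquivQuotientOfIsLocalization :
    ClassGroup B ≃* ClassGroup R ⧸ primeClassesMeeting M :=
  ((QuotientGroup.quotientMulEquivOfEq (ker_extendedHom_of_isLocalization M B).symm).trans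
    (QuotientGroup.quotientKerEquivOfSurjective _
      (extendedHom_surjective_of_isLocalization M B))).symm

end Localization

def invertingSubmonoid (H : Subgroup (ClassGroup R)) : Submonoid R where
  carrier := {x | x ≠ 0 ∧
    ∀ P : (Ideal R)⁰, (P : Ideal R).IsPrime → x ∈ (P : Ideal R) → mk0 P ∈ H}
  one_mem' := ⟨one_ne_zero, fun _ hP h1 => absurd ((Ideal.eq_top_iff_one _).mpr h1) hP.ne_top⟩
  mul_mem' := fun ⟨hx0, hx⟩ ⟨hy0, hy⟩ => ⟨mul_ne_zero hx0 hy0,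
    fun P hP hxy => (hP.mem_or_mem hxy).elim (hx P hP) (hy P hP)⟩

theorem invertingSubmonoid_le_nonZeroDivisors (H : Subgroup (ClassGroup R)) :
    invertingSubmonoid H ≤ R⁰ :=
  fun _ hx => mem_nonZeroDivisors_of_ne_zero hx.1

theorem primeClassesMeeting_invertingSubmonoid_le (H : Subgroup (ClassGroup R)) :
    primeClassesMeeting (invertingSubmonoid H) ≤ H := by
  refine (Subgroup.closure_le _).mpr ?_
  rintro _ ⟨P, hP, ⟨m, hm, hmP⟩, rfl⟩
  exact hm.2 P hP hmP

theorem le_primeClassesMeeting_invertingSubmonoid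
    (hreplete : ∀ c : ClassGroup R, ∃ 𝔭 : (Ideal R)⁰, (𝔭 : Ideal R).IsPrime ∧ mk0 𝔭 = c)
    (H : Subgroup (ClassGroup R)) : H ≤ primeClassesMeeting (invertingSubmonoid H) := by
  intro c hc
  obtain ⟨𝔭, h𝔭, rfl⟩ := hreplete c
  obtain ⟨𝔮, h𝔮, h𝔮c⟩ := hreplete (mk0 𝔭)⁻¹
  obtain ⟨⟨x, hx⟩⟩ := (mk0_eq_one_iff (𝔭 * 𝔮).2).mp (by rw [map_mul, h𝔮c, mul_inv_cancel])
  have hspan : (𝔭 : Ideal R) * 𝔮 = Ideal.span {x} := hx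
  have hx0 : x ≠ 0 := by
    rintro rfl
    exact nonZeroDivisors.ne_zero (𝔭 * 𝔮).2 (hspan.trans (Ideal.span_singleton_eq_bot.mpr rfl))
  have hclass : ∀ 𝔯 : (Ideal R)⁰, (𝔯 : Ideal R).IsPrime → mk0 𝔯 ∈ H →
      ∀ P : (Ideal R)⁰, (P : Ideal R).IsPrime → (𝔯 : Ideal R) ≤ P → mk0 P ∈ H :=
    fun 𝔯 h𝔯 h𝔯H P hP hle => by
      have h𝔯P := (h𝔯.isMaximal (nonZeroDivisors.ne_zero 𝔯.2)).eq_of_le hP.ne_top hle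
      rwa [← Subtype.ext h𝔯P]
  refine Subgroup.subset_closure ⟨𝔭, h𝔭, ⟨x, ⟨hx0, fun P hP hxP => ?_⟩, ?_⟩, rfl⟩
  · have hle : (𝔭 : Ideal R) * 𝔮 ≤ P := hspan ▸ (Ideal.span_singleton_le_iff_mem _).mpr hxP
    rcases hP.mul_le.mp hle with h | h
    · exact hclass 𝔭 h𝔭 hc P hP h
    · exact hclass 𝔮 h𝔮 (h𝔮c ▸ H.inv_mem hc) P hP h
  · exact Ideal.mul_le_left (J := (𝔮 : Ideal R)) (hspan ▸ Ideal.mem_span_singleton_self x)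

end ClassGroup

theorem replete_quotient_classGroup_general (R : Type*) [CommRing R]
    [IsDedekindDomain R] (K : Type*) [Field K] [Algebra R K] [IsFractionRing R K]
    (hreplete : ∀ c : ClassGroup R, ∃ 𝔭 : (Ideal R)⁰,
      (𝔭 : Ideal R).IsPrime ∧ ClassGroup.mk0 𝔭 = c)
    (H : Subgroup (ClassGroup R)) :
    ∃ S : Subalgebra R K, Nonempty (ClassGroup S ≃* ClassGroup R ⧸ H) := by
  let M := ClassGroup.invertingSubmonoid H
  have hM : M ≤ R⁰ := ClassGroup.invertingSubmonoid_le_nonZeroDivisors H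
  let S := Localization.subalgebra K M hM
  have : IsDedekindDomain S := IsLocalization.isDedekindDomain R hM S
  have hMH : ClassGroup.primeClassesMeeting M = H :=
    le_antisymm (ClassGroup.primeClassesMeeting_invertingSubmonoid_le H)
      (ClassGroup.le_primeClassesMeeting_invertingSubmonoid hreplete H)
  exact ⟨S, ⟨(ClassGroup.mulEquivQuotientOfIsLocalization M S).trans
    (QuotientGroup.quotientMulEquivOfEq hMH)⟩⟩

/-- Let `R` be a replete Dedekind domain, i.e. every ideal class of `R` contains a
nonzero prime ideal.  Then for every subgroup `H` of `Pic(R)` there exists an overring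
`S` of `R` (an intermediate ring `R ⊆ S ⊆ K`) with `Pic(S) ≅ Pic(R)/H`. -/
theorem replete_quotient_classGroup (R : Type*) [CommRing R] [IsDomain R]
    [IsDedekindDomain R] (K : Type*) [Field K] [Algebra R K] [IsFractionRing R K]
    (hreplete : ∀ c : ClassGroup R, ∃ 𝔭 : (Ideal R)⁰,
      (𝔭 : Ideal R).IsPrime ∧ ClassGroup.mk0 𝔭 = c)
    (H : Subgroup (ClassGroup R)) :
    ∃ S : Subalgebra R K, Nonempty (ClassGroup S ≃* ClassGroup R ⧸ H) :=
  replete_quotient_classGroup_general R K hreplete H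
end

section
/- Every overring of a weakly replete Dedekind domain is weakly replete: if every subgroup of Pic(R) is generated by classes of nonzero prime ideals of R, then the same property holds for Pic(S) for any overring S of R. -/
open scoped nonZeroDivisors

/-- A Dedekind domain `R` is weakly replete if every subgroup of its ideal class group
is generated by classes of nonzero prime ideals. -/
def WeaklyReplete (R : Type*) [CommRing R] [IsDomain R] [IsDedekindDomain R] : Prop :=
  ∀ H : Subgroup (ClassGroup R),
    H = Subgroup.closure {c : ClassGroup R | ∃ 𝔭 : (Ideal R)⁰,
      (𝔭 : Ideal R).IsPrime ∧ ClassGroup.mk0 𝔭 = c ∧ c ∈ H}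

/-!
For a nonzero prime `𝔭` of `R` the localization `R_𝔭 ⊆ K` is a discrete valuation ring, so every
`x ∈ K` either lies in `R_𝔭` or satisfies `x⁻¹ ∈ 𝔭 R_𝔭`. For an overring `S` this gives a
dichotomy: either `𝔭 S = S`, or `S ⊆ R_𝔭` and then `𝔭 S` is prime and is the only proper ideal of
`S` contracting to `𝔭`. Hence every nonzero prime of `S` is extended from `R`, so by unique
factorization every ideal of `S` is, and the extension map `Pic R → Pic S` is surjective and sends
prime classes to prime classes or to `1`. Such a surjection carries the property "every subgroup is
generated by the prime classes it contains" from `Pic R` to `Pic S`.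
-/

theorem Subgroup.eq_closure_inter_of_surjective {G N : Type*} [Group G] [Group N] {f : G →* N}
    (hf : Function.Surjective f) {P : Set G} {Q : Set N}
    (hP : ∀ H : Subgroup G, H = closure (P ∩ H)) (hPQ : ∀ g ∈ P, f g = 1 ∨ f g ∈ Q)
    (H : Subgroup N) : H = closure (Q ∩ H) := by
  refine le_antisymm ?_ ((closure_le H).mpr Set.inter_subset_right)
  calc H = (H.comap f).map f := (map_comap_eq_self_of_surjective hf H).symm
    _ = closure (f '' (P ∩ H.comap f)) :=
      (congrArg (map f) (hP _)).trans (MonoidHom.map_closure f _)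
    _ ≤ closure (Q ∩ H) := by
      rw [closure_le]
      rintro _ ⟨g, ⟨hgP, hgH⟩, rfl⟩
      obtain h | h := hPQ g hgP
      · exact h ▸ one_mem _
      · exact subset_closure ⟨h, hgH⟩

def ClassGroup.primeClasses_s11 (R : Type*) [CommRing R] [IsDedekindDomain R] : Set (ClassGroup R) :=
  {c | ∃ 𝔭 : (Ideal R)⁰, (𝔭 : Ideal R).IsPrime ∧ ClassGroup.mk0 𝔭 = c}

theorem weaklyReplete_iff {R : Type*} [CommRing R] [IsDedekindDomain R] :
    WeaklyReplete R ↔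
      ∀ H : Subgroup (ClassGroup R), H = Subgroup.closure (ClassGroup.primeClasses_s11 R ∩ H) := by
  simp only [WeaklyReplete, ClassGroup.primeClasses_s11, Set.inter_def, Set.mem_ofPred_eq,
    SetLike.mem_coe, ← and_assoc, exists_and_right]

section Overring

variable {R K : Type*} [CommRing R] [Field K] [Algebra R K] [IsFractionRing R K]

theorem Subalgebra.comap_ne_bot (S : Subalgebra R K) {J : Ideal S} (hJ : J ≠ ⊥) :
    J.comap (algebraMap R S) ≠ ⊥ := by
  obtain ⟨y, hy, hy0⟩ := Submodule.exists_mem_ne_zero_of_ne_bot hJ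
  obtain ⟨⟨n, d⟩, hnd⟩ := IsLocalization.surj R⁰ (y : K)
  have hn : algebraMap R S n = y * algebraMap R S d := Subtype.ext (by simpa using hnd.symm)
  refine (Submodule.ne_bot_iff _).mpr ⟨n, by simpa [hn] using J.mul_mem_right _ hy, ?_⟩
  rintro rfl
  have : (y : K) * algebraMap R K d = 0 := by simpa using hnd
  exact hy0 (Subtype.ext ((mul_eq_zero.mp this).resolve_right
    (IsLocalization.map_units K d).ne_zero))

variable [IsDedekindDomain R]

theorem IsDedekindDomain.exists_mul_eq_or_exists_mul_eq {𝔭 : Ideal R} [𝔭.IsPrime]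
    (hp : 𝔭 ≠ ⊥) (x : K) :
    (∃ a, ∃ s ∉ 𝔭, x * algebraMap R K s = algebraMap R K a) ∨
      ∃ a ∈ 𝔭, ∃ s ∉ 𝔭, x * algebraMap R K a = algebraMap R K s := by
  let Rₚ := Localization.subalgebra.ofField K 𝔭.primeCompl 𝔭.primeCompl_le_nonZeroDivisors
  have : IsDiscreteValuationRing Rₚ :=
    IsLocalization.AtPrime.isDiscreteValuationRing_of_dedekind_domain R hp Rₚ
  have mem_Rₚ (y : K) :
      y ∈ Rₚ ↔ ∃ a s, ∃ _ : s ∉ 𝔭, y = algebraMap R K a * (algebraMap R K s)⁻¹ := Iff.rfl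
  have hs0 {s : R} (hs : s ∉ 𝔭) : algebraMap R K s ≠ 0 :=
    IsFractionRing.to_map_ne_zero_of_mem_nonZeroDivisors (𝔭.primeCompl_le_nonZeroDivisors hs)
  by_cases hx : x ∈ Rₚ
  · obtain ⟨a, s, hs, rfl⟩ := (mem_Rₚ x).mp hx
    exact .inl ⟨a, s, hs, by field_simp [hs0 hs]⟩
  have hx0 : x ≠ 0 := by rintro rfl; exact hx Rₚ.zero_mem
  obtain ⟨y, hy⟩ := (ValuationRing.isInteger_or_isInteger Rₚ x).resolve_left
    fun ⟨y, hy⟩ ↦ hx (hy ▸ y.2)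
  obtain ⟨a, s, hs, has⟩ := (mem_Rₚ _).mp (hy ▸ y.2 : x⁻¹ ∈ Rₚ)
  have ha : a ∈ 𝔭 := by
    by_contra ha
    refine hx ((mem_Rₚ x).mpr ⟨s, a, ha, ?_⟩)
    rw [← inv_inv x, has, mul_inv, inv_inv, mul_comm]
  refine .inr ⟨a, ha, s, hs, ?_⟩
  calc x * algebraMap R K a = x * (x⁻¹ * algebraMap R K s) := by
        rw [has, mul_assoc, inv_mul_cancel₀ (hs0 hs), mul_one]
    _ = algebraMap R K s := by rw [← mul_assoc, mul_inv_cancel₀ hx0, one_mul]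

namespace Subalgebra

variable (S : Subalgebra R K)

theorem exists_mul_eq_of_map_ne_top {𝔭 : Ideal R} [𝔭.IsPrime] (hp : 𝔭 ≠ ⊥)
    (h : 𝔭.map (algebraMap R S) ≠ ⊤) (x : S) :
    ∃ a, ∃ s ∉ 𝔭, x * algebraMap R S s = algebraMap R S a := by
  have : 𝔭.IsMaximal := Ideal.IsPrime.isMaximal ‹_› hp
  obtain ⟨a, s, hs, hxs⟩ | ⟨a, ha, s, hs, hxa⟩ :=
    IsDedekindDomain.exists_mul_eq_or_exists_mul_eq hp (x : K)
  · exact ⟨a, s, hs, Subtype.ext (by simpa using hxs)⟩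
  · have hsa : algebraMap R S s = x * algebraMap R S a := Subtype.ext (by simpa using hxa.symm)
    refine absurd ?_ hs
    rw [← Ideal.comap_map_eq_self_of_isMaximal _ h, Ideal.mem_comap, hsa]
    exact Ideal.mul_mem_left _ _ (Ideal.mem_map_of_mem _ ha)

theorem map_eq_of_comap_eq {𝔭 : Ideal R} [𝔭.IsPrime] (hp : 𝔭 ≠ ⊥) {J : Ideal S}
    (hJ : J ≠ ⊤) (hJp : J.comap (algebraMap R S) = 𝔭) : 𝔭.map (algebraMap R S) = J := by
  have hle : 𝔭.map (algebraMap R S) ≤ J := Ideal.map_le_iff_le_comap.mpr hJp.ge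
  refine hle.antisymm fun y hy ↦ ?_
  obtain ⟨a, s, hs, hys⟩ := S.exists_mul_eq_of_map_ne_top hp (ne_top_of_le_ne_top hJ hle) y
  have ha : a ∈ 𝔭 := hJp ▸ Ideal.mem_comap.mpr (hys ▸ J.mul_mem_right _ hy)
  obtain ⟨c, i, hi, hcs⟩ := (Ideal.IsPrime.isMaximal ‹_› hp).exists_inv hs
  have hy' : y = algebraMap R S c * algebraMap R S a + y * algebraMap R S i := by
    rw [← hys, mul_left_comm, ← mul_add, ← map_mul, ← map_add, hcs, map_one, mul_one]
  rw [hy']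
  exact add_mem (Ideal.mul_mem_left _ _ (Ideal.mem_map_of_mem _ ha))
    (Ideal.mul_mem_left _ _ (Ideal.mem_map_of_mem _ hi))

theorem map_comap_eq_of_isPrime {𝔮 : Ideal S} [𝔮.IsPrime] (hq : 𝔮 ≠ ⊥) :
    (𝔮.comap (algebraMap R S)).map (algebraMap R S) = 𝔮 :=
  S.map_eq_of_comap_eq (S.comap_ne_bot hq) Ideal.IsPrime.ne_top' rfl

theorem isPrime_map_of_ne_top {𝔭 : Ideal R} [𝔭.IsPrime] (hp : 𝔭 ≠ ⊥)
    (h : 𝔭.map (algebraMap R S) ≠ ⊤) : (𝔭.map (algebraMap R S)).IsPrime := by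
  obtain ⟨𝔮, h𝔮, hle⟩ := Ideal.exists_le_maximal _ h
  have h𝔮p : 𝔮.comap (algebraMap R S) = 𝔭 :=
    ((Ideal.IsPrime.isMaximal ‹_› hp).eq_of_le (Ideal.comap_ne_top _ h𝔮.ne_top)
      (Ideal.map_le_iff_le_comap.mp hle)).symm
  rw [S.map_eq_of_comap_eq hp h𝔮.ne_top h𝔮p]
  exact h𝔮.isPrime

variable [IsDedekindDomain S]

theorem map_surjective :
    Function.Surjective (Ideal.map (algebraMap R S) : Ideal R → Ideal S) := by
  intro J
  induction J using UniqueFactorizationMonoid.induction_on_prime with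
  | h₁ => exact ⟨⊥, Ideal.map_bot⟩
  | h₂ J hJ => exact ⟨⊤, by rw [Ideal.map_top, Ideal.isUnit_iff.mp hJ]⟩
  | h₃ J 𝔮 _ h𝔮 ih =>
    obtain ⟨I, rfl⟩ := ih
    have : 𝔮.IsPrime := Ideal.isPrime_of_prime h𝔮
    exact ⟨𝔮.comap (algebraMap R S) * I,
      by rw [Ideal.map_mul, S.map_comap_eq_of_isPrime h𝔮.ne_zero]⟩

theorem extendedHom_surjective : Function.Surjective (ClassGroup.extendedHom R S) := by
  intro c
  obtain ⟨J, rfl⟩ := ClassGroup.mk0_surjective c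
  obtain ⟨I, hIJ⟩ := S.map_surjective J
  have hI : I ∈ (Ideal R)⁰ := by
    refine mem_nonZeroDivisors_of_ne_zero fun hI ↦ nonZeroDivisors.coe_ne_zero J ?_
    rw [← hIJ, hI, Ideal.zero_eq_bot, Ideal.map_bot, Ideal.zero_eq_bot]
  refine ⟨ClassGroup.mk0 ⟨I, hI⟩, ?_⟩
  rw [ClassGroup.extendedHom_mk0]
  exact congrArg ClassGroup.mk0 (Subtype.ext hIJ)

theorem extendedHom_eq_one_or_mem_primeClasses {c : ClassGroup R}
    (hc : c ∈ ClassGroup.primeClasses_s11 R) :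
    ClassGroup.extendedHom R S c = 1 ∨
      ClassGroup.extendedHom R S c ∈ ClassGroup.primeClasses_s11 S := by
  obtain ⟨𝔭, h𝔭, rfl⟩ := hc
  have hp : (𝔭 : Ideal R) ≠ ⊥ := nonZeroDivisors.coe_ne_zero 𝔭
  rw [ClassGroup.extendedHom_mk0]
  by_cases h : (𝔭 : Ideal R).map (algebraMap R S) = ⊤
  · refine .inl ((ClassGroup.mk0_eq_one_iff _).mpr ?_)
    simpa only [h] using top_isPrincipal
  · exact .inr ⟨_, S.isPrime_map_of_ne_top hp h, rfl⟩

end Subalgebra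

end Overring

/-- Every overring of a weakly replete Dedekind domain is weakly replete. -/
theorem overring_weaklyReplete (R : Type*) [CommRing R] [IsDomain R]
    [IsDedekindDomain R] (K : Type*) [Field K] [Algebra R K] [IsFractionRing R K]
    (hR : WeaklyReplete R) (S : Subalgebra R K) [IsDedekindDomain S] :
    WeaklyReplete S := by
  rw [weaklyReplete_iff] at hR ⊢
  exact Subgroup.eq_closure_inter_of_surjective S.extendedHom_surjective hR
    fun _ ↦ S.extendedHom_eq_one_or_mem_primeClasses
end

section
/- Let E be an elliptic curve over an algebraically closed field k. Then the standard affine coordinate ring k[E] (functions regular away from the origin O) is not replete: the trivial ideal class of k[E] is not represented by any nonzero prime ideal. -/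
/-!
A nonzero prime `P` of `k[E]` is maximal, since `k[E]` is integral over `k[x]`, and by the
Nullstellensatz its residue field is `k`, so `k[E] ⧸ P` has dimension `1` over `k`. If `P = (f)`,
that dimension is the degree of the norm `p² - (a₁x + a₃)pq - (x³ + a₂x² + a₄x + a₆)q²` of
`f = p + qy` down to `k[x]`, which is `max (2 deg p) (2 deg q + 3)` and hence never `1`.
-/

open Polynomial

theorem Ideal.IsMaximal.finrank_quotient_eq_one {k A : Type*} [Field k] [IsAlgClosed k]
    [CommRing A] [Algebra k A] [Algebra.FiniteType k A] {M : Ideal A} (hM : M.IsMaximal) :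
    Module.finrank k (A ⧸ M) = 1 := by
  let := Ideal.Quotient.field M
  have : Module.Finite k (A ⧸ M) := finite_of_finite_type_of_isJacobsonRing k _
  rw [← (AlgEquiv.ofBijective (Algebra.ofId k (A ⧸ M))
    IsAlgClosed.algebraMap_bijective_of_isIntegral).toLinearEquiv.finrank_eq, Module.finrank_self]

namespace WeierstrassCurve.Affine.CoordinateRing

section CommRing

variable {R : Type*} [CommRing R] (W : WeierstrassCurve.Affine R)

instance : Module.Finite R[X] W.CoordinateRing := .of_basis (CoordinateRing.basis W)

instance : Algebra.FiniteType R W.CoordinateRing :=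
  .of_surjective (Ideal.Quotient.mkₐ R _) (Ideal.Quotient.mkₐ_surjective R _)

end CommRing

variable {F : Type*} [Field F] {W : WeierstrassCurve.Affine F}

instance : Ring.DimensionLEOne W.CoordinateRing := .of_isIntegral F[X] W.CoordinateRing

theorem finrank_quotient_span_singleton_ne_one {f : W.CoordinateRing} (hf : f ≠ 0) :
    Module.finrank F (W.CoordinateRing ⧸ Ideal.span {f}) ≠ 1 := by
  rw [finrank_quotient_span_eq_natDegree_norm (CoordinateRing.basis W) hf]
  exact natDegree_norm_ne_one f

end WeierstrassCurve.Affine.CoordinateRing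

theorem elliptic_coordinateRing_not_replete_general (k : Type*) [Field k] [IsAlgClosed k]
    (E : WeierstrassCurve k) (P : Ideal E.toAffine.CoordinateRing)
    (hP : P.IsPrime) (hP0 : P ≠ ⊥) : ¬ P.IsPrincipal := by
  rintro ⟨f, rfl⟩
  have hf : f ≠ 0 := by rintro rfl; exact hP0 (Submodule.span_zero_singleton _)
  exact WeierstrassCurve.Affine.CoordinateRing.finrank_quotient_span_singleton_ne_one hf
    (hP.isMaximal hP0).finrank_quotient_eq_one

/-- Let `E` be an elliptic curve over an algebraically closed field `k`.  Then the
standard affine coordinate ring `k[E]` (functions regular away from the origin, i.e. the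
affine coordinate ring of a Weierstrass model) is not replete: the trivial ideal class is
not represented by any nonzero prime ideal; equivalently, no nonzero prime ideal of
`k[E]` is principal. -/
theorem elliptic_coordinateRing_not_replete (k : Type*) [Field k] [IsAlgClosed k]
    (E : WeierstrassCurve k) [E.IsElliptic] (P : Ideal E.toAffine.CoordinateRing)
    (hP : P.IsPrime) (hP0 : P ≠ ⊥) : ¬ P.IsPrincipal :=
  elliptic_coordinateRing_not_replete_general k E P hP hP0
end

section
/- An abelian group A is free abelian if and only if A admits a well-ordered ascending series of subgroups (A_s), continuous at limit ordinals, starting at 0 and ending at A, with each successive quotient A_{s+1}/A_s infinite cyclic. -/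
/-!
Given a basis, well-order its index set: `A_s` spanned by the basis vectors of rank `< s` is a
series, and `A_{s+1}/A_s` is read off by the coordinate of the basis vector of rank `s`.
Conversely, lift a generator of each `A_{s+1}/A_s` to some `x_s ∈ A_{s+1}`. In a linear relation
among the `x_s`, the term of largest index lies in `A_s`, so its coefficient vanishes: the `x_s`
are independent. They span `A` by transfinite induction: `a ∈ A_{s+1}` gives `a - n x_s ∈ A_s`
at successors, and continuity handles limits.
-/

universe u

open Ordinal Order Submodule

theorem Module.Basis.mem_span_image_diff_singleton_iff {ι R M : Type*} [Ring R] [AddCommGroup M]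
    [Module R M] (b : Module.Basis ι R M) {s : Set ι} {x : M} (hx : x ∈ span R (b '' s)) (i : ι) :
    x ∈ span R (b '' (s \ {i})) ↔ b.repr x i = 0 := by
  rw [b.mem_span_image] at hx ⊢
  refine ⟨fun h => ?_, fun h j hj => ⟨hx hj, ?_⟩⟩
  · by_contra hi
    exact (h (Finsupp.mem_support_iff.mpr hi)).2 rfl
  · rintro rfl
    exact Finsupp.mem_support_iff.mp hj h

theorem Module.Basis.nonempty_quotient_span_diff_singleton_addEquiv_int {ι A : Type*}
    [AddCommGroup A] (b : Module.Basis ι ℤ A) {s : Set ι} {i : ι} (hi : i ∈ s) :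
    let K := AddSubgroup.toIntSubmodule.symm (span ℤ (b '' s))
    let H := AddSubgroup.toIntSubmodule.symm (span ℤ (b '' (s \ {i})))
    Nonempty ((K ⧸ H.addSubgroupOf K) ≃+ ℤ) := by
  intro K H
  have hbi : b i ∈ K := subset_span ⟨i, hi, rfl⟩
  let f : K →+ ℤ := (b.coord i).toAddMonoidHom.comp K.subtype
  have hf : Function.Surjective f := fun n =>
    ⟨⟨n • b i, K.zsmul_mem hbi n⟩, by simp [f]⟩
  have hker : f.ker = H.addSubgroupOf K := by
    ext x
    rw [AddMonoidHom.mem_ker, AddSubgroup.mem_addSubgroupOf]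
    exact (b.mem_span_image_diff_singleton_iff x.2 i).symm
  exact ⟨hker ▸ QuotientAddGroup.quotientKerEquivOfSurjective f hf⟩

section BasisSeries

variable {ι : Type u} {A : Type*} [AddCommGroup A] (b : Module.Basis ι ℤ A)
  (r : ι → ι → Prop) [IsWellOrder ι r]

def Module.Basis.ordinalSeries (o : Ordinal.{u}) : AddSubgroup A :=
  AddSubgroup.toIntSubmodule.symm (span ℤ (b '' {i | typein r i < o}))

theorem Module.Basis.ordinalSeries_zero : b.ordinalSeries r 0 = ⊥ := by
  simp [Module.Basis.ordinalSeries]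

theorem Module.Basis.ordinalSeries_type : b.ordinalSeries r (type r) = ⊤ := by
  simp [Module.Basis.ordinalSeries, typein_lt_type]

theorem Module.Basis.monotone_ordinalSeries : Monotone (b.ordinalSeries r) :=
  fun _ _ h => AddSubgroup.toIntSubmodule.symm.monotone <|
    span_mono <| Set.image_mono <| Set.ofPred_subset_ofPred.mpr fun _ hi => hi.trans_le h

theorem Module.Basis.ordinalSeries_of_isSuccLimit {o : Ordinal.{u}} (ho : IsSuccLimit o) :
    b.ordinalSeries r o = ⨆ o' : {o'' : Ordinal.{u} // o'' < o}, b.ordinalSeries r o'.1 := by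
  have hset : {i | typein r i < o} = ⋃ o' : {o'' : Ordinal.{u} // o'' < o}, {i | typein r i < o'.1} := by
    ext i
    simp only [Set.mem_ofPred_eq, Set.mem_iUnion]
    exact ⟨fun h => ⟨⟨succ (typein r i), ho.succ_lt h⟩, lt_succ _⟩, fun ⟨o', h⟩ => h.trans o'.2⟩
  simp only [Module.Basis.ordinalSeries, hset, Set.image_iUnion, span_iUnion]
  exact OrderIso.map_iSup _ _

theorem Module.Basis.nonempty_ordinalSeries_succ_quotient_addEquiv_int {o : Ordinal.{u}}
    (ho : o < type r) :
    Nonempty ((b.ordinalSeries r (o + 1) ⧸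
      (b.ordinalSeries r o).addSubgroupOf (b.ordinalSeries r (o + 1))) ≃+ ℤ) := by
  set i := enum r ⟨o, ho⟩
  have hi : typein r i = o := typein_enum r ho
  have hdiff : {j | typein r j < o + 1} \ {i} = {j | typein r j < o} := by
    ext j
    rw [← hi]
    simp only [Set.mem_sdiff, Set.mem_ofPred_eq, Set.mem_singleton_iff, Order.lt_add_one_iff,
      ← (typein_injective r).eq_iff, ← ne_eq, ← lt_iff_le_and_ne]
  have := b.nonempty_quotient_span_diff_singleton_addEquiv_int
    (show i ∈ {j | typein r j < o + 1} by simp [hi])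
  rwa [hdiff] at this

end BasisSeries

theorem AddSubgroup.exists_generator_of_quotient_addEquiv_int {A : Type*} [AddCommGroup A]
    {H K : AddSubgroup A} (e : (K ⧸ H.addSubgroupOf K) ≃+ ℤ) :
    ∃ x ∈ K, (∀ a ∈ K, ∃ n : ℤ, a - n • x ∈ H) ∧ ∀ n : ℤ, n • x ∈ H → n = 0 := by
  obtain ⟨x, hx⟩ := QuotientAddGroup.mk_surjective (e.symm 1)
  have hex : e x = 1 := by rw [hx, AddEquiv.apply_symm_apply]
  refine ⟨x, x.2, fun a ha => ⟨e (⟨a, ha⟩ : K), ?_⟩, fun n hn => ?_⟩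
  · have : ((⟨a, ha⟩ - e (⟨a, ha⟩ : K) • x : K) : K ⧸ H.addSubgroupOf K) = 0 :=
      e.injective (by simp [hex])
    simpa [AddSubgroup.mem_addSubgroupOf] using (QuotientAddGroup.eq_zero_iff _).mp this
  · have : ((n • x : K) : K ⧸ H.addSubgroupOf K) = 0 :=
      (QuotientAddGroup.eq_zero_iff _).mpr (by simpa [AddSubgroup.mem_addSubgroupOf] using hn)
    simpa [hex] using congrArg e this

theorem linearIndependent_of_mem_of_smul_mem {ι R M : Type*} [LinearOrder ι] [Ring R]
    [AddCommGroup M] [Module R M] {v : ι → M} (F : ι → Submodule R M)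
    (hlt : ∀ i j, i < j → v i ∈ F j) (hF : ∀ j (a : R), a • v j ∈ F j → a = 0) :
    LinearIndependent R v := by
  classical
  rw [linearIndependent_iff]
  intro l hl
  by_contra hne
  have hsupp : l.support.Nonempty := Finsupp.support_nonempty_iff.mpr hne
  set j := l.support.max' hsupp
  have hj : j ∈ l.support := l.support.max'_mem hsupp
  have hrest : ∑ i ∈ l.support.erase j, l i • v i ∈ F j :=
    sum_mem fun i hi => smul_mem _ _ <| hlt i j <|
      lt_of_le_of_ne (l.support.le_max' i (Finset.mem_of_mem_erase hi)) (Finset.ne_of_mem_erase hi)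
  rw [Finsupp.linearCombination_apply, Finsupp.sum, ← Finset.add_sum_erase _ _ hj,
    add_eq_zero_iff_eq_neg] at hl
  exact Finsupp.mem_support_iff.mp hj (hF j _ (hl ▸ neg_mem hrest))

theorem Ordinal.series_le_of_succ_le {α : Type*} [CompleteLattice α] {c : Ordinal.{u} → α}
    {lam : Ordinal.{u}} {N : α} (h0 : c 0 ≤ N)
    (hlim : ∀ o ≤ lam, IsSuccLimit o → c o ≤ ⨆ o' : {o'' : Ordinal.{u} // o'' < o}, c o'.1)
    (hsucc : ∀ o < lam, c o ≤ N → c (o + 1) ≤ N) : ∀ o ≤ lam, c o ≤ N := by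
  intro o
  induction o using WellFoundedLT.induction with
  | _ o IH =>
    intro hole
    rcases zero_or_succ_or_isSuccLimit o with rfl | ⟨o, rfl⟩ | holim
    · exact h0
    · rw [succ_eq_add_one] at hole IH ⊢
      have ho : o < o + 1 := by simp
      exact hsucc o (ho.trans_le hole) (IH o ho (ho.le.trans hole))
    · exact (hlim o hole holim).trans <| iSup_le fun o' => IH o'.1 o'.2 (o'.2.le.trans hole)

theorem Module.Free.of_series_quotient_addEquiv_int {A : Type u} [AddCommGroup A]
    {lam : Ordinal.{u}} {c : Ordinal.{u} → AddSubgroup A} (h0 : c 0 = ⊥) (htop : c lam = ⊤)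
    (hmono : Monotone c)
    (hlim : ∀ o ≤ lam, IsSuccLimit o → c o ≤ ⨆ o' : {o'' : Ordinal.{u} // o'' < o}, c o'.1)
    (hsucc : ∀ o < lam, Nonempty ((c (o + 1) ⧸ (c o).addSubgroupOf (c (o + 1))) ≃+ ℤ)) :
    Module.Free ℤ A := by
  choose x hxc hx_gen hx_ind using fun o : {o // o < lam} =>
    AddSubgroup.exists_generator_of_quotient_addEquiv_int (hsucc o.1 o.2).some
  have hli : LinearIndependent ℤ x :=
    linearIndependent_of_mem_of_smul_mem (fun o => AddSubgroup.toIntSubmodule (c o.1))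
      (fun i _ hij => hmono (add_one_le_of_lt hij) (hxc i)) hx_ind
  let N := AddSubgroup.toIntSubmodule.symm (span ℤ (Set.range x))
  have hspan : c lam ≤ N := by
    refine Ordinal.series_le_of_succ_le (h0 ▸ bot_le) hlim (fun o ho hN a ha => ?_) lam le_rfl
    obtain ⟨n, hn⟩ := hx_gen ⟨o, ho⟩ a ha
    simpa using N.add_mem (hN hn) (N.zsmul_mem (subset_span ⟨⟨o, ho⟩, rfl⟩) n)
  exact Module.Free.of_basis <| Module.Basis.mk hli fun a _ => hspan (htop ▸ AddSubgroup.mem_top a)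

/-- An abelian group `A` is free abelian if and only if `A` admits a well-ordered
ascending series of subgroups `(A_s)_{s ≤ λ}`, continuous at limit ordinals, with
`A_0 = 0`, `A_λ = A`, and each successive quotient `A_{s+1}/A_s` infinite cyclic. -/
theorem freeAbelian_iff_exists_wellOrdered_series (A : Type u) [AddCommGroup A] :
    Module.Free ℤ A ↔
      ∃ (lam : Ordinal.{u}) (c : Ordinal.{u} → AddSubgroup A),
        c 0 = ⊥ ∧ c lam = ⊤ ∧ Monotone c ∧
        (∀ o : Ordinal.{u}, o ≤ lam → Order.IsSuccLimit o →
          c o = ⨆ o' : {o'' : Ordinal.{u} // o'' < o}, c o'.1) ∧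
        (∀ o : Ordinal.{u}, o < lam →
          Nonempty ((c (o + 1) ⧸ (c o).addSubgroupOf (c (o + 1))) ≃+ ℤ)) := by
  constructor
  · intro _
    let b := Module.Free.chooseBasis ℤ A
    exact ⟨_, b.ordinalSeries WellOrderingRel, b.ordinalSeries_zero _, b.ordinalSeries_type _,
      b.monotone_ordinalSeries _, fun _ _ ho => b.ordinalSeries_of_isSuccLimit _ ho,
      fun _ ho => b.nonempty_ordinalSeries_succ_quotient_addEquiv_int _ ho⟩
  · rintro ⟨lam, c, h0, htop, hmono, hlim, hsucc⟩
    exact .of_series_quotient_addEquiv_int h0 htop hmono (fun o ho hl => (hlim o ho hl).le) hsucc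
end

section
/- Let R be a Dedekind domain and S an overring of R with extension map on fractional ideals ι₊(I) = IS and contraction ι* on primes. Then ι₊ ∘ ι* is the identity on the set of nonzero prime ideals of S. -/
/-!
The contraction `𝔭 = 𝒫 ∩ R` is a nonzero, hence maximal, prime, and `R_𝔭` is a discrete valuation
ring of `K`. Every `s ∈ S` lies in `R_𝔭`: otherwise `s⁻¹ = a / m` with `a ∈ 𝔭`, `m ∉ 𝔭`, and then
`m = a s ∈ 𝒫 ∩ R = 𝔭`. So each `x ∈ 𝒫` is `a / m` with `m ∉ 𝔭` and `a = m x ∈ 𝔭`, and writing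
`1 = r m + q` with `q ∈ 𝔭` gives `x = r a + q x ∈ 𝔭 S`.
-/

open nonZeroDivisors

theorem Ideal.map_comap_eq_of_forall_exists_mul_mem_range {R S : Type*} [CommRing R]
    [CommRing S] (f : R →+* S) (P : Ideal S) (hmax : (P.comap f).IsMaximal)
    (hfrac : ∀ x : S, ∃ m ∉ P.comap f, f m * x ∈ f.range) :
    (P.comap f).map f = P := by
  refine le_antisymm map_comap_le fun x hx ↦ ?_
  obtain ⟨m, hm, a, ha⟩ := hfrac x
  have ha_mem : a ∈ P.comap f := by
    rw [mem_comap, ha]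
    exact P.mul_mem_left _ hx
  obtain ⟨r, q, hq, hrq⟩ := hmax.exists_inv hm
  have hx_eq : x = f (r * a) + f q * x := by
    calc x = f (r * m + q) * x := by rw [hrq, map_one, one_mul]
      _ = f (r * a) + f q * x := by rw [map_add, map_mul, map_mul, ha]; ring
  rw [hx_eq]
  exact add_mem (mem_map_of_mem f (mul_mem_left _ r ha_mem))
    (mul_mem_right _ _ (mem_map_of_mem f hq))

theorem Subalgebra.algebraMap_mul_eq_iff {R A : Type*} [CommSemiring R] [Semiring A]
    [Algebra R A] {S : Subalgebra R A} (m a : R) (x : S) :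
    algebraMap R S m * x = algebraMap R S a ↔ algebraMap R A m * x = algebraMap R A a :=
  Subtype.val_inj.symm

section FractionField

variable {R K : Type*} [CommRing R] [IsDomain R] [Field K] [Algebra R K] [IsFractionRing R K]

theorem Localization.subalgebra.mem_ofField_iff_exists_mul_eq {M : Submonoid R} (hM : M ≤ R⁰)
    {x : K} :
    x ∈ Localization.subalgebra.ofField K M hM ↔
      ∃ a, ∃ m ∈ M, algebraMap R K m * x = algebraMap R K a := by
  refine ⟨fun ⟨a, m, hm, hx⟩ ↦ ⟨a, m, hm, ?_⟩, fun ⟨a, m, hm, hx⟩ ↦ ⟨a, m, hm, ?_⟩⟩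
  · have := IsFractionRing.to_map_ne_zero_of_mem_nonZeroDivisors (K := K) (hM hm)
    rw [hx]; field_simp
  · have := IsFractionRing.to_map_ne_zero_of_mem_nonZeroDivisors (K := K) (hM hm)
    rw [← hx]; field_simp

theorem Subalgebra.comap_ne_bot_of_ne_bot {S : Subalgebra R K} {P : Ideal S} (hP : P ≠ ⊥) :
    P.comap (algebraMap R S) ≠ ⊥ := by
  obtain ⟨x, hxP, hx0⟩ := Submodule.exists_mem_ne_zero_of_ne_bot hP
  have hx_alg : IsAlgebraic R (x : K) := (IsLocalization.isAlgebraic K R⁰).isAlgebraic _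
  exact Ideal.comap_ne_bot_of_algebraic_mem hx0 hxP
    (Subalgebra.isAlgebraic_iff_isAlgebraic_val.mpr hx_alg)

theorem Subalgebra.exists_mul_mem_range_of_valuationRing {S : Subalgebra R K} (P : Ideal S)
    [P.IsPrime] [ValuationRing (Localization.subalgebra.ofField K
      (P.comap (algebraMap R S)).primeCompl (P.comap _).primeCompl_le_nonZeroDivisors)] (x : S) :
    ∃ m ∉ P.comap (algebraMap R S), algebraMap R S m * x ∈ (algebraMap R S).range := by
  set p := P.comap (algebraMap R S)
  rcases ValuationRing.isInteger_or_isInteger (Localization.subalgebra.ofField K p.primeCompl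
    p.primeCompl_le_nonZeroDivisors) (x : K) with ⟨⟨y, hy⟩, hyx⟩ | ⟨⟨y, hy⟩, hyx⟩
  · obtain rfl : y = x := hyx
    obtain ⟨a, m, hm, hmx⟩ := (Localization.subalgebra.mem_ofField_iff_exists_mul_eq _).mp hy
    exact ⟨m, hm, a, ((algebraMap_mul_eq_iff m a x).mpr hmx).symm⟩
  · obtain rfl : y = (x : K)⁻¹ := hyx
    obtain ⟨a, m, hm, hmx⟩ := (Localization.subalgebra.mem_ofField_iff_exists_mul_eq _).mp hy
    by_cases hx0 : x = 0
    · exact ⟨1, p.primeCompl.one_mem, 0, by rw [hx0, mul_zero, map_zero]⟩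
    have hm_eq : algebraMap R S a * x = algebraMap R S m := by
      rw [algebraMap_mul_eq_iff, ← hmx]
      field_simp [show (x : K) ≠ 0 by exact_mod_cast hx0]
    have ha : a ∉ p := fun ha ↦ hm <| by
      change algebraMap R S m ∈ P
      rw [← hm_eq]
      exact P.mul_mem_right _ ha
    exact ⟨a, ha, m, hm_eq.symm⟩

end FractionField

theorem overring_map_comap_eq_id_on_primes_general (R : Type*) [CommRing R]
    [IsDedekindDomain R] (K : Type*) [Field K] [Algebra R K] [IsFractionRing R K]
    (S : Subalgebra R K) :
    ∀ P : Ideal S, P.IsPrime → P ≠ ⊥ →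
      (P.comap (algebraMap R S)).map (algebraMap R S) = P := by
  intro P hP hP0
  have hp0 := Subalgebra.comap_ne_bot_of_ne_bot hP0
  have : IsDiscreteValuationRing (Localization.subalgebra.ofField K
      (P.comap (algebraMap R S)).primeCompl (P.comap _).primeCompl_le_nonZeroDivisors) :=
    IsLocalization.AtPrime.isDiscreteValuationRing_of_dedekind_domain R hp0 _
  exact Ideal.map_comap_eq_of_forall_exists_mul_mem_range _ P
    (Ideal.IsPrime.isMaximal inferInstance hp0) (Subalgebra.exists_mul_mem_range_of_valuationRing P)

/-- Let `R` be a Dedekind domain with fraction field `K` and `S` an overring of `R`,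
with extension map `ι₊(I) = IS` on ideals and contraction `ι⋆(𝒫) = 𝒫 ∩ R`.  Then
`ι₊ ∘ ι⋆` is the identity on nonzero prime ideals of `S`. -/
theorem overring_map_comap_eq_id_on_primes (R : Type*) [CommRing R] [IsDomain R]
    [IsDedekindDomain R] (K : Type*) [Field K] [Algebra R K] [IsFractionRing R K]
    (S : Subalgebra R K) :
    ∀ P : Ideal S, P.IsPrime → P ≠ ⊥ →
      (P.comap (algebraMap R S)).map (algebraMap R S) = P :=
  overring_map_comap_eq_id_on_primes_general R K S
end
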